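/- arXiv:2101.04091 — 9 statements merged into one kernel-verified Lean document; each statement's English description precedes it below -/
import Mathlib

section
/- The number of ad-nilpotent ideals of the Borel subalgebra of upper triangular matrices in gl_{n+1}, i.e., the number of upper order ideals in the poset of positive roots of type A_n, equals the Catalan number C_{n+1} = binom(2n+2, n+1)/(n+2). -/
open Finset

def cnt : ℕ → ℕ → ℕ
  | 0, _ => 1
  | n+1, k => ∑ v ∈ Finset.range (min (n+1) k + 1), cnt n v

lemma hs (m k : ℕ) : ∑ v ∈ range (k+1), (m+v).choose m = (m+k+1).choose (m+1) := by
  induction k with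
  | zero => simp
  | succ k ih =>
    rw [Finset.sum_range_succ, ih, show m+(k+1) = m+k+1 from rfl,
      show m+k+1+1 = (m+k+1)+1 from rfl, Nat.choose_succ_succ (m+k+1) m]
    simp only [Nat.succ_eq_add_one]; omega

lemma hs2 (m k : ℕ) : ∑ v ∈ range (k+1), (m+v).choose (m+1) = (m+k+1).choose (m+2) := by
  induction k with
  | zero => simp
  | succ k ih =>
    rw [Finset.sum_range_succ, ih, show m+(k+1) = m+k+1 from rfl,
      show m+k+1+1 = (m+k+1)+1 from rfl, show m+2 = (m+1)+1 from rfl,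
      Nat.choose_succ_succ (m+k+1) (m+1)]
    simp only [Nat.succ_eq_add_one]; omega

lemma cnt_closed (n : ℕ) : ∀ k, k ≤ n+1 → cnt n k + (n+1+k).choose (n+2) = (n+1+k).choose k := by
  induction n with
  | zero =>
    intro k hk
    interval_cases k <;> simp [cnt]
  | succ n ih =>
    have main : ∀ k, k ≤ n+1 → cnt (n+1) k + (n+2+k).choose (n+3) = (n+2+k).choose k := by
      intro k hk
      have hmin : min (n+1) k = k := by omega
      have hsum : cnt (n+1) k = ∑ v ∈ range (k+1), cnt n v := by
        rw [cnt, hmin]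
      have key : ∑ v ∈ range (k+1), (cnt n v + (n+1+v).choose (n+2)) =
          ∑ v ∈ range (k+1), (n+1+v).choose v := by
        refine Finset.sum_congr rfl fun v hv => ?_
        exact ih v (by simp only [Finset.mem_range] at hv; omega)
      rw [Finset.sum_add_distrib] at key
      have h1 : ∑ v ∈ range (k+1), (n+1+v).choose (n+2) = (n+2+k).choose (n+3) := by
        have := hs2 (n+1) k
        rw [show n+1+k+1 = n+2+k from by omega, show n+1+1 = n+2 from rfl,
          show n+1+2 = n+3 from rfl] at this
        exact this
      have h2 : ∑ v ∈ range (k+1), (n+1+v).choose v = (n+2+k).choose k := by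
        have e1 : ∀ v ∈ range (k+1), (n+1+v).choose v = (n+1+v).choose (n+1) := by
          intro v hv
          rw [← Nat.choose_symm (show v ≤ n+1+v by omega), show n+1+v-v = n+1 from by omega]
        rw [Finset.sum_congr rfl e1]
        have := hs (n+1) k
        rw [show n+1+k+1 = n+2+k from by omega, show n+1+1 = n+2 from rfl] at this
        rw [this, ← Nat.choose_symm (show k ≤ n+2+k by omega),
          show n+2+k-k = n+2 from by omega]
      rw [← hsum, h1, h2] at key
      exact key
    intro k hk
    rcases Nat.lt_or_ge k (n+2) with h | h
    · exact main k (by omega)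
    · have hk2 : k = n+2 := by omega
      subst hk2
      have heq : cnt (n+1) (n+2) = cnt (n+1) (n+1) := by
        rw [cnt, cnt, show min (n+1) (n+2) = n+1 from by omega,
          show min (n+1) (n+1) = n+1 from by omega]
      have hm := main (n+1) le_rfl
      rw [show n+2+(n+1) = 2*n+3 from by omega] at hm
      have p1 : (2*n+4).choose (n+2) = (2*n+3).choose (n+1) + (2*n+3).choose (n+2) := by
        rw [show 2*n+4 = (2*n+3)+1 from by omega, show n+2 = (n+1)+1 from rfl,
          Nat.choose_succ_succ]
      have p2 : (2*n+4).choose (n+3) = (2*n+3).choose (n+2) + (2*n+3).choose (n+3) := by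
        rw [show 2*n+4 = (2*n+3)+1 from by omega, show n+3 = (n+2)+1 from rfl,
          Nat.choose_succ_succ]
      rw [heq, show n+1+1+(n+2) = 2*n+4 from by omega, show n+1+2 = n+3 from rfl]
      omega

lemma cnt_mul (n : ℕ) : cnt n n * (n+2) = (2*n+2).choose (n+1) := by
  have h := cnt_closed n n (by omega)
  have h2 := Nat.choose_succ_right_eq (2*n+1) (n+1)
  have h3 : (2*n+1).choose (n+1) = (2*n+1).choose n := by
    rw [← Nat.choose_symm (show n+1 ≤ 2*n+1 by omega), show 2*n+1-(n+1) = n from by omega]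
  have h4 : (2*n+2).choose (n+1) = (2*n+1).choose n + (2*n+1).choose (n+1) := by
    rw [show 2*n+2 = (2*n+1)+1 from rfl, show n+1 = n+1 from rfl]
    exact Nat.choose_succ_succ (2*n+1) n
  rw [show n+1+n = 2*n+1 from by omega] at h
  rw [show 2*n+1-(n+1) = n from by omega] at h2
  -- h : cnt n n + (2n+1).choose (n+2) = (2n+1).choose n
  -- h2 : (2n+1).choose (n+2) * (n+2) = (2n+1).choose (n+1) * n
  have h5 := congrArg (· * (n+2)) h
  simp only [add_mul] at h5
  rw [h2, h3] at h5
  -- h5 : cnt n n * (n+2) + choose n * n = choose n * (n+2)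
  have h6 : (2*n+1).choose n * (n+2) = (2*n+1).choose n * n + (2*n+1).choose n * 2 := by ring
  omega

abbrev SB (n k : ℕ) : Type := {f : Fin n → ℕ // Monotone f ∧ ∀ j : Fin n, f j ≤ min ((j:ℕ)+1) k}

noncomputable instance (n k : ℕ) : Fintype (SB n k) :=
  Fintype.ofInjective
    (fun f : SB n k => (fun j => (⟨f.1 j, by
        have h1 := f.2.2 j; have h2 := j.isLt; omega⟩ : Fin (n+2))))
    (by
      intro a b h
      apply Subtype.ext
      funext j
      simpa using congrArg Fin.val (congrFun h j))

lemma card_filter_lt {n m : ℕ} (h : m ≤ n) :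
    ((univ : Finset (Fin n)).filter fun i : Fin n => (i:ℕ) < m).card = m := by
  have himg : ((univ : Finset (Fin n)).filter fun i : Fin n => (i:ℕ) < m).image Fin.val = range m := by
    ext a
    simp only [Finset.mem_image, Finset.mem_filter, Finset.mem_univ, true_and, Finset.mem_range]
    constructor
    · rintro ⟨i, hi, rfl⟩; exact hi
    · intro ha; exact ⟨⟨a, by omega⟩, ha, rfl⟩
  rw [← Finset.card_image_of_injective _ Fin.val_injective, himg, Finset.card_range]

section
variable {n : ℕ} (I : Finset (Fin n × Fin n))
  (hI1 : ∀ p ∈ I, p.1 ≤ p.2)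
  (hI2 : ∀ p ∈ I, ∀ q : Fin n × Fin n, q.1 ≤ q.2 → q.1 ≤ p.1 → p.2 ≤ q.2 → q ∈ I)

def colF (j : Fin n) : Finset (Fin n) := univ.filter fun i => (i, j) ∈ I

include hI1 in
lemma col_card_le (j : Fin n) : (colF I j).card ≤ (j:ℕ) + 1 := by
  have hsub : colF I j ⊆ univ.filter fun i => (i:ℕ) < (j:ℕ)+1 := by
    intro i hi
    simp only [colF, Finset.mem_filter, Finset.mem_univ, true_and] at hi ⊢
    have h2 : i ≤ j := hI1 (i, j) hi
    rw [Fin.le_def] at h2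
    omega
  have := Finset.card_le_card hsub
  rwa [card_filter_lt (by omega : (j:ℕ)+1 ≤ n)] at this

include hI1 hI2 in
lemma mem_iff_lt_col_card (i j : Fin n) : (i, j) ∈ I ↔ (i:ℕ) < (colF I j).card := by
  constructor
  · intro hmem
    have hsub : (univ.filter fun i' : Fin n => (i':ℕ) < (i:ℕ)+1) ⊆ colF I j := by
      intro i' hi'
      simp only [Finset.mem_filter, Finset.mem_univ, true_and] at hi'
      simp only [colF, Finset.mem_filter, Finset.mem_univ, true_and]
      have hij : i ≤ j := hI1 (i, j) hmem
      rw [Fin.le_def] at hij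
      exact hI2 (i, j) hmem (i', j) (show i' ≤ j by rw [Fin.le_def]; omega)
        (show i' ≤ i by rw [Fin.le_def]; omega) le_rfl
    have := Finset.card_le_card hsub
    rw [card_filter_lt (by have := i.isLt; omega : (i:ℕ)+1 ≤ n)] at this
    omega
  · intro hcard
    by_contra hni
    have hij : (i:ℕ) ≤ (j:ℕ) := by
      have := col_card_le I hI1 j
      omega
    have hsub : colF I j ⊆ univ.filter fun i' : Fin n => (i':ℕ) < (i:ℕ) := by
      intro i' hi'
      simp only [colF, Finset.mem_filter, Finset.mem_univ, true_and] at hi' ⊢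
      by_contra hcon
      exact hni (hI2 (i', j) hi' (i, j) (show i ≤ j by rw [Fin.le_def]; omega)
        (show i ≤ i' by rw [Fin.le_def]; omega) le_rfl)
    have := Finset.card_le_card hsub
    rw [card_filter_lt (by have := i.isLt; omega : (i:ℕ) ≤ n)] at this
    omega
end

theorem numIdeals_eq_catalan' (n : ℕ) :
    Fintype.card
      {I : Finset (Fin n × Fin n) //
        (∀ p ∈ I, p.1 ≤ p.2) ∧
        (∀ p ∈ I, ∀ q : Fin n × Fin n, q.1 ≤ q.2 → q.1 ≤ p.1 → p.2 ≤ q.2 → q ∈ I)} =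
      Fintype.card (SB n n) := by
  have hbij : Function.Bijective
      (fun f : SB n n =>
        (⟨univ.filter fun p : Fin n × Fin n => (p.1:ℕ) < f.1 p.2, by
          constructor
          · intro p hp
            simp only [Finset.mem_filter, Finset.mem_univ, true_and] at hp
            have := f.2.2 p.2
            rw [Fin.le_def]
            omega
          · intro p hp q hq1 hq2 hq3
            simp only [Finset.mem_filter, Finset.mem_univ, true_and] at hp ⊢
            have hmono := f.2.1 hq3
            rw [Fin.le_def] at hq2
            omega⟩ :
        {I : Finset (Fin n × Fin n) //
          (∀ p ∈ I, p.1 ≤ p.2) ∧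
          (∀ p ∈ I, ∀ q : Fin n × Fin n, q.1 ≤ q.2 → q.1 ≤ p.1 → p.2 ≤ q.2 → q ∈ I)})) := by
    constructor
    · intro f₁ f₂ h
      have h' := congrArg Subtype.val h
      simp only at h'
      rw [Finset.ext_iff] at h'
      apply Subtype.ext
      funext j
      rcases lt_trichotomy (f₁.1 j) (f₂.1 j) with hlt | heq | hgt
      · exfalso
        have hb : f₁.1 j < n := by
          have := f₂.2.2 j; have := j.isLt; omega
        have := (h' (⟨f₁.1 j, hb⟩, j)).mpr (by
          simp only [Finset.mem_filter, Finset.mem_univ, true_and]; exact hlt)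
        simp only [Finset.mem_filter, Finset.mem_univ, true_and] at this
        omega
      · exact heq
      · exfalso
        have hb : f₂.1 j < n := by
          have := f₁.2.2 j; have := j.isLt; omega
        have := (h' (⟨f₂.1 j, hb⟩, j)).mp (by
          simp only [Finset.mem_filter, Finset.mem_univ, true_and]; exact hgt)
        simp only [Finset.mem_filter, Finset.mem_univ, true_and] at this
        omega
    · rintro ⟨I, hI1, hI2⟩
      refine ⟨⟨fun j => (colF I j).card, ?_, ?_⟩, ?_⟩
      · intro j j' hjj'
        apply Finset.card_le_card
        intro i hi
        simp only [colF, Finset.mem_filter, Finset.mem_univ, true_and] at hi ⊢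
        refine hI2 (i, j) hi (i, j') ?_ le_rfl hjj'
        have h3 : i ≤ j := hI1 (i, j) hi
        show i ≤ j'
        rw [Fin.le_def] at h3 hjj' ⊢
        omega
      · intro j
        have h1 := col_card_le I hI1 j
        have h2 : (colF I j).card ≤ n := by
          simpa [colF] using Finset.card_filter_le (univ : Finset (Fin n))
            (fun i => (i, j) ∈ I)
        show (colF I j).card ≤ min ((j:ℕ)+1) n
        omega
      · apply Subtype.ext
        simp only
        ext p
        simp only [Finset.mem_filter, Finset.mem_univ, true_and]
        exact (mem_iff_lt_col_card I hI1 hI2 p.1 p.2).symm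
  exact (Fintype.card_of_bijective hbij).symm

lemma mono_snoc {n : ℕ} (g : Fin n → ℕ) (v : ℕ) (hg : Monotone g) (hv : ∀ j, g j ≤ v) :
    Monotone (Fin.snoc g v) := by
  intro a b hab
  rcases eq_or_ne b (Fin.last n) with rfl | hb
  · rw [Fin.snoc_last]
    rcases eq_or_ne a (Fin.last n) with rfl | ha
    · rw [Fin.snoc_last]
    · obtain ⟨a', rfl⟩ := Fin.exists_castSucc_eq.mpr ha
      rw [Fin.snoc_castSucc]; exact hv a'
  · obtain ⟨b', rfl⟩ := Fin.exists_castSucc_eq.mpr hb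
    have ha : a ≠ Fin.last n := by
      intro h; subst h
      exact absurd (lt_of_le_of_lt hab (Fin.castSucc_lt_last b')) (lt_irrefl _)
    obtain ⟨a', rfl⟩ := Fin.exists_castSucc_eq.mpr ha
    rw [Fin.snoc_castSucc, Fin.snoc_castSucc]
    exact hg (Fin.castSucc_le_castSucc_iff.mp hab)

lemma card_SB (n : ℕ) : ∀ k, Fintype.card (SB n k) = cnt n k := by
  induction n with
  | zero =>
    intro k
    rw [show cnt 0 k = 1 from rfl]
    rw [Fintype.card_eq_one_iff]
    refine ⟨⟨fun j => j.elim0, fun a => a.elim0, fun j => j.elim0⟩, ?_⟩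
    intro y
    apply Subtype.ext
    funext j
    exact j.elim0
  | succ n ih =>
    intro k
    set m := min (n+1) k with hm
    have hinv : Function.Bijective
        (fun p : Σ v : Fin (m+1), SB n (v:ℕ) =>
          (⟨Fin.snoc p.2.1 ((p.1 : ℕ)), by
            constructor
            · exact mono_snoc _ _ p.2.2.1 (fun j => le_trans (p.2.2.2 j) (min_le_right _ _))
            · intro j
              rcases eq_or_ne j (Fin.last n) with rfl | hj
              · rw [Fin.snoc_last]
                have := p.1.isLt
                simp only [Fin.val_last]
                omega
              · obtain ⟨j', rfl⟩ := Fin.exists_castSucc_eq.mpr hj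
                rw [Fin.snoc_castSucc]
                have h1 := p.2.2.2 j'
                have h2 := p.1.isLt
                simp only [Fin.coe_castSucc]
                omega⟩ : SB (n+1) k)) := by
      constructor
      · rintro ⟨v₁, g₁⟩ ⟨v₂, g₂⟩ h
        have h' := congrArg Subtype.val h
        simp only at h'
        have hv : v₁ = v₂ := by
          have := congrFun h' (Fin.last n)
          rw [Fin.snoc_last, Fin.snoc_last] at this
          exact Fin.ext this
        subst hv
        have hg : g₁ = g₂ := by
          apply Subtype.ext
          funext j
          have := congrFun h' (Fin.castSucc j)
          rwa [Fin.snoc_castSucc, Fin.snoc_castSucc] at this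
        rw [hg]
      · intro f
        have hlast : f.1 (Fin.last n) < m + 1 := by
          have := f.2.2 (Fin.last n)
          simp only [Fin.val_last] at this
          omega
        refine ⟨⟨⟨f.1 (Fin.last n), hlast⟩, ⟨fun j => f.1 j.castSucc, ?_, ?_⟩⟩, ?_⟩
        · exact fun a b hab => f.2.1 (Fin.castSucc_le_castSucc_iff.mpr hab)
        · intro j
          have h1 := f.2.2 j.castSucc
          have h2 : f.1 j.castSucc ≤ f.1 (Fin.last n) := f.2.1 (Fin.le_last _)
          simp only [Fin.coe_castSucc] at h1 ⊢
          omega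
        · apply Subtype.ext
          exact Fin.snoc_init_self f.1
    rw [← Fintype.card_of_bijective hinv, Fintype.card_sigma]
    have : ∀ v : Fin (m+1), Fintype.card (SB n (v:ℕ)) = cnt n v := fun v => ih v
    rw [Finset.sum_congr rfl (fun v _ => this v), Fin.sum_univ_eq_sum_range (fun v => cnt n v)]
    rw [cnt]

/-- The number of upper order ideals in the poset of positive roots of
type `A n` (roots are pairs `[i,j]` with `i ≤ j`, here encoded as pairs of `Fin n`,
ordered by `[i,j] ≼ [i',j']` iff `i' ≤ i` and `j ≤ j'`) equals the Catalan number
`C (n+1) = (2n+2).choose (n+1) / (n+2)`. -/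
theorem numIdeals_eq_catalan (n : ℕ) :
    Fintype.card
      {I : Finset (Fin n × Fin n) //
        (∀ p ∈ I, p.1 ≤ p.2) ∧
        (∀ p ∈ I, ∀ q : Fin n × Fin n, q.1 ≤ q.2 → q.1 ≤ p.1 → p.2 ≤ q.2 → q ∈ I)} =
      (2 * n + 2).choose (n + 1) / (n + 2) := by
  rw [numIdeals_eq_catalan' n, card_SB n n]
  symm
  rw [Nat.div_eq_iff_eq_mul_left (show 0 < n+2 by omega) ⟨cnt n n, by
    rw [← cnt_mul n]; ring⟩]
  rw [← cnt_mul n]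
end

section
/- Ballot sequences of length 2n (binary sequences with n ones and n zeros such that every prefix has at least as many ones as zeros) are in bijection with upper order ideals in the poset of positive roots of type A_{n-1}. -/
/-!
A word `b` of length `2n` is recorded by its prefix zero counts `z l`. Its ideal consists of the
roots `(i, j)` (indexed from `0`, `i ≤ j`) with `i < z (i + j + 2)`: since `z` is monotone and
`1`-Lipschitz this set is upward closed, and since a ballot word has `l - n ≤ z l ≤ l / 2`, the
value `z l` can be read off the antidiagonal `i + j + 2 = l`, so the map is injective.
Conversely, if row `k` of an upper ideal `I` has `r k` roots, then `r` is antitone with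
`r k ≤ n - 1 - k`, so the positions `n + k - r k` (`k < n`) strictly increase and satisfy
`2k + 1 ≤ n + k - r k`; the word with its zeros exactly there is a ballot word whose ideal is `I`.
-/

open Finset

namespace BallotIdeal

section ZeroCount

variable {N : ℕ} (b : Fin N → Bool)

def zeroCount (l : ℕ) : ℕ := #{t : Fin N | (t : ℕ) < l ∧ b t = false}

lemma zeroCount_succ (l : ℕ) :
    zeroCount b (l + 1) = zeroCount b l + #{t : Fin N | (t : ℕ) = l ∧ b t = false} := by
  rw [zeroCount, zeroCount, ← card_union_of_disjoint, ← filter_or]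
  · congr 1
    ext t
    simp only [mem_filter, mem_univ, true_and, Nat.lt_succ_iff_lt_or_eq]
    tauto
  · exact disjoint_filter.2 fun t _ ht ht' => ht.1.ne ht'.1

lemma zeroCount_succ_le (l : ℕ) : zeroCount b (l + 1) ≤ zeroCount b l + 1 := by
  rw [zeroCount_succ]
  gcongr
  exact card_le_one.2 fun s hs t ht => Fin.ext <| by simp_all

lemma zeroCount_mono : Monotone (zeroCount b) :=
  monotone_nat_of_le_succ fun l => by rw [zeroCount_succ]; exact le_self_add

lemma zeroCount_add_le (l k : ℕ) : zeroCount b (l + k) ≤ zeroCount b l + k := by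
  induction k with
  | zero => rfl
  | succ k ih => rw [← add_assoc]; exact (zeroCount_succ_le b _).trans (by omega)

lemma zeroCount_le_self (l : ℕ) : zeroCount b l ≤ l := by
  simpa [zeroCount] using zeroCount_add_le b 0 l

lemma zeroCount_val_succ (t : Fin N) :
    zeroCount b (t + 1) = zeroCount b t + if b t = false then 1 else 0 := by
  rw [zeroCount_succ]
  congr 1
  split_ifs with h
  · refine card_eq_one.2 ⟨t, ?_⟩
    ext s
    simp only [mem_filter, mem_univ, true_and, mem_singleton, Fin.val_inj]
    exact ⟨And.left, fun hs => ⟨hs, hs ▸ h⟩⟩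
  · exact card_eq_zero.2 <| filter_eq_empty_iff.2 fun s _ hs => h (Fin.ext hs.1 ▸ hs.2)

lemma eq_of_zeroCount_eq {b' : Fin N → Bool} (h : ∀ l ≤ N, zeroCount b l = zeroCount b' l) :
    b = b' := by
  funext t
  have hstep := zeroCount_val_succ b t
  have hstep' := zeroCount_val_succ b' t
  have hbefore := h t t.isLt.le
  have hafter := h (t + 1) t.isLt
  cases hb : b t <;> cases hb' : b' t <;>
    simp only [hb, hb', Bool.true_eq_false, if_true, if_false] at hstep hstep' <;>
    first | rfl | omega

lemma card_filter_le_and_eq_false (j : Fin N) :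
    #{i | i ≤ j ∧ b i = false} = zeroCount b (j + 1) := by
  simp only [zeroCount, Fin.le_def, Nat.lt_succ_iff]

lemma card_filter_eq_false : #{i | b i = false} = zeroCount b N := by
  simp only [zeroCount, Fin.is_lt, true_and]

lemma card_filter_le_and_eq_true (j : Fin N) :
    #{i | i ≤ j ∧ b i = true} = j + 1 - zeroCount b (j + 1) := by
  have hsplit := card_filter_add_card_filter_not (s := Iic j) (b · = true)
  have htrue : {i ∈ Iic j | b i = true} = ({i | i ≤ j ∧ b i = true} : Finset (Fin N)) := by
    ext; simp
  have hfalse :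
      {i ∈ Iic j | ¬b i = true} = ({i | i ≤ j ∧ b i = false} : Finset (Fin N)) := by
    ext; simp
  rw [htrue, hfalse, Fin.card_Iic, card_filter_le_and_eq_false] at hsplit
  omega

end ZeroCount

section Ballot

def IsBallot (n : ℕ) (b : Fin (2 * n) → Bool) : Prop :=
  #{i | b i = true} = n ∧ #{i | b i = false} = n ∧
    ∀ j : Fin (2 * n), #{i | i ≤ j ∧ b i = false} ≤ #{i | i ≤ j ∧ b i = true}

variable {n : ℕ} {b : Fin (2 * n) → Bool}

lemma IsBallot.zeroCount_two_mul (hb : IsBallot n b) : zeroCount b (2 * n) = n := by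
  rw [← card_filter_eq_false]
  exact hb.2.1

lemma IsBallot.two_mul_zeroCount_le (hb : IsBallot n b) {l : ℕ} (hl : l ≤ 2 * n) :
    2 * zeroCount b l ≤ l := by
  obtain _ | l := l
  · simpa using zeroCount_le_self b 0
  have hprefix := hb.2.2 ⟨l, hl⟩
  rw [card_filter_le_and_eq_false, card_filter_le_and_eq_true] at hprefix
  have := zeroCount_le_self b (l + 1)
  dsimp only at hprefix
  omega

lemma IsBallot.le_add_zeroCount (hb : IsBallot n b) {l : ℕ} (hl : l ≤ 2 * n) :
    l ≤ n + zeroCount b l := by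
  have := zeroCount_add_le b l (2 * n - l)
  rw [Nat.add_sub_cancel' hl, hb.zeroCount_two_mul] at this
  omega

lemma isBallot_of_zeroCount (htotal : zeroCount b (2 * n) = n)
    (hprefix : ∀ l ≤ 2 * n, 2 * zeroCount b l ≤ l) : IsBallot n b := by
  refine ⟨?_, by rwa [card_filter_eq_false], fun j => ?_⟩
  · have hsplit := card_filter_add_card_filter_not (s := univ) (b · = true)
    simp only [Bool.not_eq_true, card_univ, Fintype.card_fin, card_filter_eq_false, htotal]
      at hsplit
    omega
  · rw [card_filter_le_and_eq_false, card_filter_le_and_eq_true]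
    have := hprefix (j + 1) j.isLt
    omega

end Ballot

section UpperIdeal

def IsUpperIdeal {m : ℕ} (I : Finset (Fin m × Fin m)) : Prop :=
  (∀ p ∈ I, p.1 ≤ p.2) ∧
    ∀ p ∈ I, ∀ q : Fin m × Fin m, q.1 ≤ q.2 → q.1 ≤ p.1 → p.2 ≤ q.2 → q ∈ I

variable {m : ℕ} {I : Finset (Fin m × Fin m)}

def rowLength (I : Finset (Fin m × Fin m)) (i : ℕ) : ℕ := #{q ∈ I | (q.1 : ℕ) = i}

lemma mem_iff_sub_card_le_of_isUpperSet {S : Finset (Fin m)} (hS : IsUpperSet (S : Set (Fin m)))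
    (j : Fin m) : j ∈ S ↔ m - #S ≤ j := by
  obtain hempty | ⟨a, ha⟩ := hS.eq_empty_or_Ici
  · rw [coe_eq_empty] at hempty
    simp [hempty, j.isLt]
  · rw [← coe_Ici, coe_inj] at ha
    rw [ha, mem_Ici, Fin.card_Ici, Fin.le_def]
    have := a.isLt
    omega

lemma card_row_eq_rowLength (a : Fin m) : #{j | (a, j) ∈ I} = rowLength I a := by
  refine card_bij (fun j _ => (a, j)) (fun j hj => ?_) (fun j _ j' _ h => (Prod.ext_iff.1 h).2)
    fun q hq => ⟨q.2, ?_⟩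
  · simpa using hj
  · simp only [mem_filter] at hq
    have ha : a = q.1 := Fin.ext hq.2.symm
    exact ⟨by simpa [ha] using hq.1, by rw [ha]⟩

lemma IsUpperIdeal.mem_iff (hI : IsUpperIdeal I) (p : Fin m × Fin m) :
    p ∈ I ↔ m - rowLength I p.1 ≤ p.2 := by
  have hrow : IsUpperSet (({j | (p.1, j) ∈ I} : Finset (Fin m)) : Set (Fin m)) := by
    intro j j' hjj' hj
    simp only [coe_filter, mem_univ, true_and, Set.mem_ofPred_eq] at hj ⊢
    exact hI.2 _ hj _ ((hI.1 _ hj).trans hjj') le_rfl hjj'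
  rw [← card_row_eq_rowLength, ← mem_iff_sub_card_le_of_isUpperSet hrow]
  simp

lemma IsUpperIdeal.rowLength_le (hI : IsUpperIdeal I) (i : ℕ) : rowLength I i ≤ m - i := by
  rw [← Nat.card_Ico]
  refine card_le_card_of_injOn (fun q => (q.2 : ℕ)) (fun q hq => ?_) fun q hq q' hq' h => ?_
  · simp only [mem_coe, mem_filter] at hq
    rw [mem_coe, mem_Ico, ← hq.2]
    exact ⟨hI.1 q hq.1, q.2.isLt⟩
  · simp only [mem_coe, mem_filter] at hq hq'
    exact Prod.ext (Fin.ext (hq.2.trans hq'.2.symm)) (Fin.ext h)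

lemma IsUpperIdeal.rowLength_antitone (hI : IsUpperIdeal I) : Antitone (rowLength I) := by
  intro i' i hi'i
  obtain hi | hi := lt_or_ge i m
  · let a' : Fin m := ⟨i', by omega⟩
    refine card_le_card_of_injOn (fun q => (a', q.2)) (fun q hq => ?_) fun q hq q' hq' h => ?_
    · simp only [mem_coe, mem_filter] at hq ⊢
      have ha' : a' ≤ q.1 := Fin.le_def.2 (hq.2 ▸ hi'i)
      exact ⟨hI.2 q hq.1 _ (ha'.trans (hI.1 q hq.1)) ha' le_rfl, rfl⟩
    · simp only [mem_coe, mem_filter] at hq hq'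
      exact Prod.ext (Fin.ext (hq.2.trans hq'.2.symm)) (Prod.ext_iff.1 h).2
  · have := hI.rowLength_le i
    omega

end UpperIdeal

section ToIdeal

variable {N m : ℕ}

def toIdeal (b : Fin N → Bool) : Finset (Fin m × Fin m) :=
  {p | p.1 ≤ p.2 ∧ (p.1 : ℕ) < zeroCount b (p.1 + p.2 + 2)}

@[simp]
lemma mem_toIdeal {b : Fin N → Bool} {p : Fin m × Fin m} :
    p ∈ toIdeal b ↔ p.1 ≤ p.2 ∧ (p.1 : ℕ) < zeroCount b (p.1 + p.2 + 2) := by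
  simp [toIdeal]

lemma isUpperIdeal_toIdeal (b : Fin N → Bool) : IsUpperIdeal (toIdeal (m := m) b) := by
  refine ⟨fun p hp => (mem_toIdeal.1 hp).1, fun p hp q hq hqp hpq => mem_toIdeal.2 ⟨hq, ?_⟩⟩
  have hp := (mem_toIdeal.1 hp).2
  rw [Fin.le_def] at hqp hpq
  obtain hle | hle := le_total (p.1 + p.2 + 2 : ℕ) (q.1 + q.2 + 2)
  · have := zeroCount_mono b hle
    omega
  · have := zeroCount_add_le b (q.1 + q.2 + 2) (p.1 + p.2 - (q.1 + q.2))
    rw [show (q.1 + q.2 + 2 : ℕ) + (p.1 + p.2 - (q.1 + q.2)) = p.1 + p.2 + 2 by omega] at this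
    omega

variable {n : ℕ}

lemma zeroCount_le_of_toIdeal_subset {b b' : Fin (2 * n) → Bool} (hb : IsBallot n b)
    (hb' : IsBallot n b') (h : toIdeal (m := n - 1) b ⊆ toIdeal b') {l : ℕ} (hl : l ≤ 2 * n) :
    zeroCount b l ≤ zeroCount b' l := by
  have hhalf := hb.two_mul_zeroCount_le hl
  have hlower := hb'.le_add_zeroCount hl
  set z := zeroCount b l
  by_cases hz : z = 0 ∨ z + n ≤ l
  · omega
  -- the root of `toIdeal b` on the antidiagonal `i + j + 2 = l` with the largest `i`
  let p : Fin (n - 1) × Fin (n - 1) := (⟨z - 1, by omega⟩, ⟨l - 1 - z, by omega⟩)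
  have hpl : (p.1 + p.2 + 2 : ℕ) = l := by simp only [p]; omega
  have hp : p ∈ toIdeal b := mem_toIdeal.2 ⟨Fin.le_def.2 (by simp only [p]; omega), by
    rw [hpl]; simp only [p]; omega⟩
  have := (mem_toIdeal.1 (h hp)).2
  rw [hpl] at this
  simp only [p] at this
  omega

lemma toIdeal_injective_of_isBallot {b b' : Fin (2 * n) → Bool} (hb : IsBallot n b)
    (hb' : IsBallot n b') (h : toIdeal (m := n - 1) b = toIdeal b') : b = b' :=
  eq_of_zeroCount_eq b fun _ hl => (zeroCount_le_of_toIdeal_subset hb hb' h.subset hl).antisymm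
    (zeroCount_le_of_toIdeal_subset hb' hb h.symm.subset hl)

end ToIdeal

section OfIdeal

lemma lt_card_filter_lt_iff {α : Type*} [LinearOrder α] {p : ℕ → α} (hp : Monotone p)
    {n i : ℕ} (hi : i < n) (x : α) : i < #{k ∈ range n | p k < x} ↔ p i < x := by
  constructor
  · intro h
    by_contra! hle
    have hsub : {k ∈ range n | p k < x} ⊆ range i := fun k hk => by
      simp only [mem_filter, mem_range] at hk ⊢
      by_contra! hik
      exact (hle.trans (hp hik)).not_gt hk.2
    have := card_le_card hsub
    rw [card_range] at this
    omega
  · intro h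
    have hsub : range (i + 1) ⊆ {k ∈ range n | p k < x} := fun k hk => by
      simp only [mem_filter, mem_range] at hk ⊢
      exact ⟨by omega, (hp (by omega)).trans_lt h⟩
    have := card_le_card hsub
    rw [card_range] at this
    omega

variable {n : ℕ} {I : Finset (Fin (n - 1) × Fin (n - 1))}

def zeroPos (I : Finset (Fin (n - 1) × Fin (n - 1))) (k : ℕ) : ℕ := n + k - rowLength I k

def ofIdeal (I : Finset (Fin (n - 1) × Fin (n - 1))) (t : Fin (2 * n)) : Bool :=
  !decide (∃ k < n, zeroPos I k = t)

lemma ofIdeal_eq_false_iff {t : Fin (2 * n)} :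
    ofIdeal I t = false ↔ ∃ k < n, zeroPos I k = t := by
  simp [ofIdeal]

lemma zeroPos_lt {k : ℕ} (hk : k < n) : zeroPos I k < 2 * n := by
  unfold zeroPos
  omega

lemma IsUpperIdeal.zeroPos_strictMono (hI : IsUpperIdeal I) : StrictMono (zeroPos I) :=
  strictMono_nat_of_lt_succ fun k => by
    have := hI.rowLength_le k
    have := hI.rowLength_antitone (by omega : k ≤ k + 1)
    unfold zeroPos
    omega

lemma IsUpperIdeal.two_mul_add_one_le_zeroPos (hI : IsUpperIdeal I) {k : ℕ} (hk : k < n) :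
    2 * k + 1 ≤ zeroPos I k := by
  have := hI.rowLength_le k
  unfold zeroPos
  omega

lemma IsUpperIdeal.zeroCount_ofIdeal (hI : IsUpperIdeal I) (l : ℕ) :
    zeroCount (ofIdeal I) l = #{k ∈ range n | zeroPos I k < l} := by
  symm
  refine card_bij (fun k hk => ⟨zeroPos I k, zeroPos_lt (mem_range.1 (mem_filter.1 hk).1)⟩)
    (fun k hk => ?_) (fun k _ k' _ h => hI.zeroPos_strictMono.injective (Fin.val_eq_of_eq h))
    fun t ht => ?_
  · simp only [mem_filter, mem_range] at hk
    simpa [ofIdeal_eq_false_iff] using ⟨hk.2, k, hk.1, rfl⟩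
  · simp only [mem_filter, mem_univ, true_and, ofIdeal_eq_false_iff] at ht
    obtain ⟨htl, k, hk, hkt⟩ := ht
    exact ⟨k, by simpa [hkt] using ⟨hk, htl⟩, Fin.ext hkt⟩

lemma IsUpperIdeal.isBallot_ofIdeal (hI : IsUpperIdeal I) : IsBallot n (ofIdeal I) := by
  refine isBallot_of_zeroCount ?_ fun l _ => ?_
  · rw [hI.zeroCount_ofIdeal, filter_true_of_mem fun k hk => zeroPos_lt (mem_range.1 hk),
      card_range]
  · rw [hI.zeroCount_ofIdeal]
    set c := #{k ∈ range n | zeroPos I k < l}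
    obtain hc | hc := Nat.eq_zero_or_pos c
    · omega
    have hcn : c ≤ n := (card_filter_le _ _).trans (card_range n).le
    have hlast := (lt_card_filter_lt_iff hI.zeroPos_strictMono.monotone (n := n) (i := c - 1)
      (by omega) l).1 (by omega)
    have := hI.two_mul_add_one_le_zeroPos (k := c - 1) (by omega)
    omega

lemma IsUpperIdeal.toIdeal_ofIdeal (hI : IsUpperIdeal I) : toIdeal (ofIdeal I) = I := by
  ext p
  have hp1 : (p.1 : ℕ) < n := by omega
  rw [mem_toIdeal, hI.zeroCount_ofIdeal,
    lt_card_filter_lt_iff hI.zeroPos_strictMono.monotone hp1, hI.mem_iff]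
  have := hI.rowLength_le p.1
  unfold zeroPos
  exact ⟨fun h => by omega, fun h => ⟨hI.1 p (hI.mem_iff p |>.2 h), by omega⟩⟩

end OfIdeal

end BallotIdeal

open BallotIdeal in
theorem ballot_equiv_ideals_general (n : ℕ) :
    Nonempty
      ({b : Fin (2 * n) → Bool //
          (Finset.univ.filter (fun i => b i = true)).card = n ∧
          (Finset.univ.filter (fun i => b i = false)).card = n ∧
          ∀ j : Fin (2 * n),
            (Finset.univ.filter (fun i => i ≤ j ∧ b i = false)).card ≤
            (Finset.univ.filter (fun i => i ≤ j ∧ b i = true)).card} ≃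
        {I : Finset (Fin (n - 1) × Fin (n - 1)) //
          (∀ p ∈ I, p.1 ≤ p.2) ∧
          (∀ p ∈ I, ∀ q : Fin (n - 1) × Fin (n - 1),
            q.1 ≤ q.2 → q.1 ≤ p.1 → p.2 ≤ q.2 → q ∈ I)}) :=
  ⟨Equiv.ofBijective (fun b => ⟨toIdeal b.1, isUpperIdeal_toIdeal b.1⟩)
    ⟨fun b b' h => Subtype.ext (toIdeal_injective_of_isBallot b.2 b'.2 (congrArg Subtype.val h)),
      fun I => ⟨⟨ofIdeal I.1, IsUpperIdeal.isBallot_ofIdeal I.2⟩,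
        Subtype.ext (IsUpperIdeal.toIdeal_ofIdeal I.2)⟩⟩⟩

/-- Ballot sequences of length `2n` (binary sequences with `n` ones and
`n` zeros such that every prefix has at least as many ones as zeros) are in bijection
with upper order ideals in the poset of positive roots of type `A (n-1)`
(pairs `[i,j]`, `i ≤ j`, ordered by `[i,j] ≼ [i',j']` iff `i' ≤ i ∧ j ≤ j'`). -/
theorem ballot_equiv_ideals (n : ℕ) (hn : 1 ≤ n) :
    Nonempty
      ({b : Fin (2 * n) → Bool //
          (Finset.univ.filter (fun i => b i = true)).card = n ∧
          (Finset.univ.filter (fun i => b i = false)).card = n ∧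
          ∀ j : Fin (2 * n),
            (Finset.univ.filter (fun i => i ≤ j ∧ b i = false)).card ≤
            (Finset.univ.filter (fun i => i ≤ j ∧ b i = true)).card} ≃
        {I : Finset (Fin (n - 1) × Fin (n - 1)) //
          (∀ p ∈ I, p.1 ≤ p.2) ∧
          (∀ p ∈ I, ∀ q : Fin (n - 1) × Fin (n - 1),
            q.1 ≤ q.2 → q.1 ≤ p.1 → p.2 ≤ q.2 → q ∈ I)}) :=
  ballot_equiv_ideals_general n
end

section
/- Let I be a subspace of strictly upper triangular (n+1)×(n+1) matrices that is stable under Lie bracket with all upper triangular matrices and stable under conjugation by diagonal matrices. Then I is spanned by the elementary matrices t_{ij} (i<j) it contains, and the set of (i,j) with t_{ij} ∈ I is an upper order ideal: if t_{ij} ∈ I and i' ≤ i, j ≤ j', i' < j', then t_{i'j'} ∈ I. -/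
/-!
Bracketing twice with diagonal matrix units extracts entries:
`⁅E_jj, ⁅E_ii, x⁆⁆ = -(x_ij E_ij + x_ji E_ji)` for `i ≠ j`. For strictly upper triangular `x ∈ I`
the second term vanishes, so every `x_ij E_ij` lies in `I`, and `I` is spanned by the matrix units
it contains. Bracketing `E_ij` with the upper triangular units `E_i'i` and `E_jj'` moves it up to
`E_i'j` and then right to `E_i'j'`.
-/

namespace Matrix

section Ring

variable {n R : Type*} [Fintype n] [DecidableEq n] [Ring R]

theorem lie_single_single_of_ne {i j k : n} (hki : k ≠ i) (a b : R) :
    ⁅single i j a, single j k b⁆ = single i k (a * b) := by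
  rw [Ring.lie_def, single_mul_single_same, single_mul_single_of_ne (h := hki), sub_zero]

theorem lie_single_single_of_ne' {i j k : n} (hki : k ≠ i) (a b : R) :
    ⁅single j k a, single i j b⁆ = -single i k (b * a) := by
  rw [Ring.lie_def, single_mul_single_of_ne (h := hki), single_mul_single_same, zero_sub]

theorem lie_single_lie_single {i j : n} (hij : i ≠ j) (x : Matrix n n R) :
    ⁅single j j (1 : R), ⁅single i i (1 : R), x⁆⁆ =
      -(single i j (x i j) + single j i (x j i)) := by
  simp only [Ring.lie_def, mul_sub, sub_mul, ← mul_assoc, single_mul_mul_single, one_mul, mul_one,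
    single_mul_single_of_ne _ j j i hij.symm, zero_mul]
  rw [mul_assoc x, single_mul_single_of_ne _ i i j hij, mul_zero]
  abel

variable [LinearOrder n] {I : Submodule R (Matrix n n R)}
  (hI : ∀ b : Matrix n n R, b.IsUpperTriangular → ∀ x ∈ I, ⁅b, x⁆ ∈ I)
include hI

theorem single_apply_mem_of_apply_eq_zero {x : Matrix n n R} (hx : x ∈ I) {i j : n} (hij : i ≠ j)
    (hji : x j i = 0) : single i j (x i j) ∈ I := by
  have hupper (k : n) : (single k k (1 : R)).IsUpperTriangular := blockTriangular_single le_rfl 1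
  have := hI _ (hupper j) _ (hI _ (hupper i) x hx)
  rw [lie_single_lie_single hij, hji, single_zero, add_zero] at this
  simpa using I.neg_mem this

theorem single_apply_mem (hstrict : ∀ x ∈ I, ∀ i j, j ≤ i → x i j = 0) {x : Matrix n n R}
    (hx : x ∈ I) (i j : n) : single i j (x i j) ∈ I := by
  obtain hij | hji := lt_or_ge i j
  · exact single_apply_mem_of_apply_eq_zero hI hx hij.ne (hstrict x hx j i hij.le)
  · simp [hstrict x hx i j hji]

theorem single_one_mem_of_le_of_le {i j i' j' : n} (hij : i < j) (h : single i j (1 : R) ∈ I)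
    (hi : i' ≤ i) (hj : j ≤ j') : single i' j' (1 : R) ∈ I := by
  have hrow : single i' j (1 : R) ∈ I := by
    obtain rfl | hi := hi.eq_or_lt
    · exact h
    simpa [lie_single_single_of_ne (hi.trans hij).ne'] using
      hI _ (blockTriangular_single hi.le 1) _ h
  obtain rfl | hj := hj.eq_or_lt
  · exact hrow
  simpa [lie_single_single_of_ne' (hi.trans_lt (hij.trans hj)).ne'] using
    I.neg_mem (hI _ (blockTriangular_single hj.le 1) _ hrow)

end Ring

theorem eq_span_single_one_of_single_apply_mem {m n K : Type*} [Fintype m] [Fintype n]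
    [DecidableEq m] [DecidableEq n] [Field K] (p : m → n → Prop) {I : Submodule K (Matrix m n K)}
    (hsupp : ∀ x ∈ I, ∀ i j, ¬ p i j → x i j = 0)
    (hI : ∀ x ∈ I, ∀ i j, single i j (x i j) ∈ I) :
    I = Submodule.span K {M | ∃ i j, p i j ∧ M = single i j 1 ∧ M ∈ I} := by
  refine le_antisymm (fun x hx => ?_) (Submodule.span_le.2 fun M ⟨_, _, _, _, hM⟩ => hM)
  rw [matrix_eq_sum_single x]
  refine Submodule.sum_mem _ fun i _ => Submodule.sum_mem _ fun j _ => ?_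
  obtain hx0 | hx0 := eq_or_ne (x i j) 0
  · simp [hx0]
  have hp : p i j := by_contra fun hp => hx0 (hsupp x hx i j hp)
  have h1 : single i j (1 : K) ∈ I := by
    simpa [smul_single, hx0] using I.smul_mem (x i j)⁻¹ (hI x hx i j)
  rw [← mul_one (x i j), ← smul_eq_mul, ← smul_single]
  exact Submodule.smul_mem _ _ (Submodule.subset_span ⟨i, j, hp, rfl, h1⟩)

end Matrix

theorem adNilpotent_ideal_is_sum_of_root_spaces_general (n : ℕ)
    (I : Submodule ℂ (Matrix (Fin (n + 1)) (Fin (n + 1)) ℂ))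
    (hstrict : ∀ x ∈ I, ∀ i j : Fin (n + 1), j ≤ i → x i j = 0)
    (hbracket : ∀ b : Matrix (Fin (n + 1)) (Fin (n + 1)) ℂ,
      (∀ i j : Fin (n + 1), j < i → b i j = 0) → ∀ x ∈ I, b * x - x * b ∈ I) :
    I = Submodule.span ℂ
        {m | ∃ i j : Fin (n + 1), i < j ∧ m = Matrix.single i j (1 : ℂ) ∧ m ∈ I} ∧
    ∀ i j i' j' : Fin (n + 1), i < j → Matrix.single i j (1 : ℂ) ∈ I →
      i' ≤ i → j ≤ j' → i' < j' → Matrix.single i' j' (1 : ℂ) ∈ I := by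
  have hI : ∀ b : Matrix (Fin (n + 1)) (Fin (n + 1)) ℂ, b.IsUpperTriangular →
      ∀ x ∈ I, ⁅b, x⁆ ∈ I :=
    fun b hb x hx => by simpa [Ring.lie_def] using hbracket b (fun _ _ h => hb h) x hx
  refine ⟨?_, fun i j i' j' hij h hi hj _ => Matrix.single_one_mem_of_le_of_le hI hij h hi hj⟩
  exact Matrix.eq_span_single_one_of_single_apply_mem _
    (fun x hx i j => hstrict x hx i j ∘ not_lt.1) fun x hx => Matrix.single_apply_mem hI hstrict hx

/-- Let `I` be a subspace of strictly upper triangular `(n+1)×(n+1)`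
complex matrices that is stable under Lie bracket with all upper triangular matrices
and stable under conjugation by (invertible) diagonal matrices.  Then `I` is spanned
by the elementary matrices `t_{ij}` (`i < j`) it contains, and the set of `(i,j)` with
`t_{ij} ∈ I` is an upper order ideal: if `t_{ij} ∈ I` and `i' ≤ i`, `j ≤ j'`, `i' < j'`,
then `t_{i'j'} ∈ I`. -/
theorem adNilpotent_ideal_is_sum_of_root_spaces (n : ℕ)
    (I : Submodule ℂ (Matrix (Fin (n + 1)) (Fin (n + 1)) ℂ))
    (hstrict : ∀ x ∈ I, ∀ i j : Fin (n + 1), j ≤ i → x i j = 0)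
    (hbracket : ∀ b : Matrix (Fin (n + 1)) (Fin (n + 1)) ℂ,
      (∀ i j : Fin (n + 1), j < i → b i j = 0) → ∀ x ∈ I, b * x - x * b ∈ I)
    (hdiag : ∀ d : Fin (n + 1) → ℂˣ, ∀ x ∈ I,
      (Matrix.diagonal (fun i => (d i : ℂ))) * x *
        (Matrix.diagonal (fun i => (((d i)⁻¹ : ℂˣ) : ℂ))) ∈ I) :
    I = Submodule.span ℂ
        {m | ∃ i j : Fin (n + 1), i < j ∧ m = Matrix.single i j (1 : ℂ) ∧ m ∈ I} ∧
    ∀ i j i' j' : Fin (n + 1), i < j → Matrix.single i j (1 : ℂ) ∈ I →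
      i' ≤ i → j ≤ j' → i' < j' → Matrix.single i' j' (1 : ℂ) ∈ I :=
  adNilpotent_ideal_is_sum_of_root_spaces_general n I hstrict hbracket
end

section
/- Let P be the standard parabolic of GL_{n+1} with block sizes μ_1 ≥ μ_2 ≥ ... ≥ μ_ℓ. Then the generic Jordan type of a matrix in the nilradical n_P of Lie(P) is the dual partition μ*, where μ*_j = #{i : μ_i ≥ j}. In particular the nilpotent orbit associated to n_P is O_{μ*}. -/
/-- Partial sums `B i = μ_0 + ⋯ + μ_{i-1}` of the block sizes: the block boundaries. -/
def blockBoundary (mu : ℕ → ℕ) (i : ℕ) : ℕ := ∑ k ∈ Finset.range i, mu k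

/-- The nilradical `n_P` of the standard parabolic of `GL_{n+1}` with block sizes
`μ_0, μ_1, …` (in order): the block strictly upper triangular matrices.  A matrix
`x` lies in `n_P` iff `x r c = 0` whenever the column `c` does not lie strictly to
the right of the diagonal block containing row `r`. -/
def blockNilrad (n : ℕ) (mu : ℕ → ℕ) :
    Set (Matrix (Fin (n + 1)) (Fin (n + 1)) ℂ) :=
  {x | ∀ r c : Fin (n + 1), ∀ i : ℕ,
    blockBoundary mu i ≤ (r : ℕ) → (c : ℕ) < blockBoundary mu (i + 1) → x r c = 0}

/-- The dual partition `μ*`, with `μ*_j = #{i : μ_i ≥ j}` (here `dualPart mu ℓ j`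
is `μ*_{j+1}`, `0`-indexed, for a partition supported on `{0, …, ℓ-1}`). -/
def dualPart (mu : ℕ → ℕ) (ℓ : ℕ) (j : ℕ) : ℕ :=
  ((Finset.range ℓ).filter (fun i => j + 1 ≤ mu i)).card

/-!
Write `B k = μ_0 + ⋯ + μ_{k-1}`. Since `μ` is decreasing, `Σ_j (μ*_j - k)₊ = Σ_{i ≥ k} μ_i
= n + 1 - B k`, so everything reduces to `rank (x ^ k) ≤ n + 1 - B k` on `n_P`, with equality for
one `x`. For `x ∈ n_P` the entry `(x ^ k) r c` vanishes unless the block of `c` lies at least `k`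
blocks to the right of that of `r`; in particular the first `B k` columns of `x ^ k` vanish.
Conversely, because the blocks shrink, there is room to send `e_c` to the basis vector at the same
offset in the previous block; this `x` lies in `n_P`, and `x ^ k` maps the `e_c` with `c ≥ B k`
injectively to basis vectors, so its rank is `n + 1 - B k`.
-/

open Finset

theorem Set.injOn_iterate_of_depth {α : Type*} {s : α → α} {d : α → ℕ}
    (hs : Set.InjOn s {c | 1 ≤ d c}) (hd : ∀ c, 1 ≤ d c → d (s c) + 1 = d c) (k : ℕ) :
    Set.InjOn s^[k] {c | k ≤ d c} := by
  induction k with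
  | zero => exact Function.injective_id.injOn
  | succ k ih =>
    intro a (ha : k + 1 ≤ d a) b (hb : k + 1 ≤ d b) hab
    have hsa := hd a (by omega)
    have hsb := hd b (by omega)
    exact hs (show 1 ≤ d a by omega) (show 1 ≤ d b by omega)
      (ih (show k ≤ d (s a) by omega) (show k ≤ d (s b) by omega) hab)

namespace Matrix

variable {m n R : Type*} [Fintype n] [DecidableEq n]

theorem rank_le_card_of_apply_eq_zero [Fintype m] [Field R] (A : Matrix m n R) (s : Finset n)
    (h : ∀ r, ∀ c ∉ s, A r c = 0) : A.rank ≤ #s := by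
  classical
  set D : Matrix n n R := diagonal fun c => if c ∈ s then 1 else 0
  have hA : A = A * D := by
    ext r c
    by_cases hc : c ∈ s <;> simp [D, hc, h r c]
  calc A.rank ≤ D.rank := hA ▸ rank_mul_le_right _ _
    _ = #s := by
        rw [rank_diagonal, Fintype.card_subtype]
        congr 1
        ext c
        simp

theorem card_le_rank_of_mulVec_single [DecidableEq m] [CommRing R] [Nontrivial R]
    (A : Matrix m n R) (s : Finset n) (t : n → m) (ht : Set.InjOn t s)
    (h : ∀ c ∈ s, A *ᵥ Pi.single c 1 = Pi.single (t c) 1) : #s ≤ A.rank := by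
  have hsub : A.submatrix (fun c : s => t c) (fun c : s => c) = 1 := by
    ext a b
    have hb := congrFun (h b b.2) (t a)
    rw [mulVec_single_one, col_apply] at hb
    simp only [submatrix_apply, hb, Pi.single_apply, one_apply]
    exact if_congr ⟨fun hab => Subtype.ext (ht a.2 b.2 hab), fun hab => hab ▸ rfl⟩ rfl rfl
  calc #s = (1 : Matrix s s R).rank := by rw [rank_one, Fintype.card_coe]
    _ ≤ A.rank := hsub ▸ rank_submatrix_le _ _ _

variable {A : Matrix n n R} {s : n → n} {d : n → ℕ}

theorem pow_mulVec_single_eq_iterate [Semiring R]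
    (hA : ∀ c, 1 ≤ d c → A *ᵥ Pi.single c 1 = Pi.single (s c) 1)
    (hd : ∀ c, 1 ≤ d c → d (s c) + 1 = d c) (k : ℕ) (c : n) (hk : k ≤ d c) :
    A ^ k *ᵥ Pi.single c 1 = Pi.single (s^[k] c) 1 := by
  induction k generalizing c with
  | zero => rw [pow_zero, one_mulVec, Function.iterate_zero_apply]
  | succ k ih =>
    have hc : 1 ≤ d c := by omega
    rw [pow_succ, ← mulVec_mulVec, hA c hc, ih (s c) (by have := hd c hc; omega),
      Function.iterate_succ_apply]

theorem card_le_rank_pow_of_iterate [CommRing R] [Nontrivial R]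
    (hA : ∀ c, 1 ≤ d c → A *ᵥ Pi.single c 1 = Pi.single (s c) 1)
    (hd : ∀ c, 1 ≤ d c → d (s c) + 1 = d c) (hs : Set.InjOn s {c | 1 ≤ d c}) (k : ℕ) :
    #{c | k ≤ d c} ≤ (A ^ k).rank :=
  card_le_rank_of_mulVec_single _ _ _
    (fun _ ha _ hb => Set.injOn_iterate_of_depth hs hd k (by simpa using ha) (by simpa using hb))
    fun c hc => pow_mulVec_single_eq_iterate hA hd k c (by simpa using hc)

end Matrix

theorem Finset.eq_range_card_of_isLowerSet {s : Finset ℕ} (hs : IsLowerSet (s : Set ℕ)) :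
    s = range #s := by
  obtain h | ⟨a, h⟩ := hs.eq_univ_or_Iio
  · exact absurd (h ▸ s.finite_toSet) Set.infinite_univ
  · have : s = range a := by
      ext i
      rw [← Finset.mem_coe, h, Set.mem_Iio, mem_range]
    rw [this, card_range]

theorem Fin.card_filter_le_val (N b : ℕ) : #{c : Fin N | b ≤ (c : ℕ)} = N - b := by
  have := card_filter_add_card_filter_not (s := univ) fun c : Fin N => (c : ℕ) < b
  simp only [not_lt, card_univ, Fintype.card_fin, Fin.card_filter_val_lt] at this
  omega

section Blocks

variable {mu : ℕ → ℕ} {ℓ : ℕ}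

theorem blockBoundary_succ (i : ℕ) : blockBoundary mu (i + 1) = blockBoundary mu i + mu i :=
  sum_range_succ _ _

theorem blockBoundary_mono : Monotone (blockBoundary mu) := fun _ _ h =>
  sum_le_sum_of_subset (range_subset_range.2 h)

/-- The index of the block containing position `p`; meaningful for `p < blockBoundary mu ℓ`. -/
def blockIndex (mu : ℕ → ℕ) (ℓ p : ℕ) : ℕ :=
  Nat.findGreatest (fun j => blockBoundary mu j ≤ p) ℓ

theorem le_blockIndex_iff {p : ℕ} (hp : p < blockBoundary mu ℓ) {k : ℕ} :
    k ≤ blockIndex mu ℓ p ↔ blockBoundary mu k ≤ p := by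
  refine ⟨fun hk => (blockBoundary_mono hk).trans ?_, fun hk => Nat.le_findGreatest ?_ hk⟩
  · exact Nat.findGreatest_spec (P := fun j => blockBoundary mu j ≤ p) (Nat.zero_le ℓ)
      (Nat.zero_le p)
  · by_contra! hkℓ
    exact (blockBoundary_mono hkℓ.le).trans hk |>.not_gt hp

theorem blockIndex_eq {p j : ℕ} (hp : p < blockBoundary mu ℓ) (hj : blockBoundary mu j ≤ p)
    (hj' : p < blockBoundary mu (j + 1)) : blockIndex mu ℓ p = j :=
  le_antisymm (Nat.lt_succ_iff.1 <| lt_of_not_ge fun h => ((le_blockIndex_iff hp).1 h).not_gt hj')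
    ((le_blockIndex_iff hp).2 hj)

theorem blockBoundary_blockIndex_le {p : ℕ} (hp : p < blockBoundary mu ℓ) :
    blockBoundary mu (blockIndex mu ℓ p) ≤ p :=
  (le_blockIndex_iff hp).1 le_rfl

theorem lt_blockBoundary_blockIndex_succ {p : ℕ} (hp : p < blockBoundary mu ℓ) :
    p < blockBoundary mu (blockIndex mu ℓ p + 1) :=
  lt_of_not_ge fun h => (Nat.lt_succ_self _).not_ge ((le_blockIndex_iff hp).2 h)

/-- Moves position `c` to the same offset in the previous block (fixing the first block). -/
def blockShift (mu : ℕ → ℕ) (ℓ : ℕ) {N : ℕ} (c : Fin N) : Fin N :=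
  ⟨c - mu (blockIndex mu ℓ c - 1), by omega⟩

variable {N : ℕ} (hmono : Antitone mu) (hN : blockBoundary mu ℓ = N)
include hN

theorem blockShift_add {c : Fin N} (hc : 1 ≤ blockIndex mu ℓ c) :
    (blockShift mu ℓ c : ℕ) + mu (blockIndex mu ℓ c - 1) = c := by
  have h1 := blockBoundary_blockIndex_le (c.2.trans_eq hN.symm)
  have h2 := blockBoundary_succ (mu := mu) (blockIndex mu ℓ c - 1)
  rw [Nat.sub_add_cancel hc] at h2
  simp only [blockShift]
  omega

include hmono

theorem blockShift_mem_Ico {c : Fin N} (hc : 1 ≤ blockIndex mu ℓ c) :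
    blockBoundary mu (blockIndex mu ℓ c - 1) ≤ blockShift mu ℓ c ∧
      (blockShift mu ℓ c : ℕ) < blockBoundary mu (blockIndex mu ℓ c) := by
  have hp : (c : ℕ) < blockBoundary mu ℓ := c.2.trans_eq hN.symm
  have h1 := blockBoundary_blockIndex_le hp
  have h2 := lt_blockBoundary_blockIndex_succ hp
  have h3 := blockShift_add hN hc
  have h4 := blockBoundary_succ (mu := mu) (blockIndex mu ℓ c - 1)
  have h5 : mu (blockIndex mu ℓ c) ≤ mu (blockIndex mu ℓ c - 1) := hmono (Nat.sub_le _ 1)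
  rw [Nat.sub_add_cancel hc] at h4
  rw [blockBoundary_succ] at h2
  omega

theorem blockIndex_blockShift_add_one {c : Fin N} (hc : 1 ≤ blockIndex mu ℓ c) :
    blockIndex mu ℓ (blockShift mu ℓ c) + 1 = blockIndex mu ℓ c := by
  obtain ⟨h1, h2⟩ := blockShift_mem_Ico hmono hN hc
  rw [blockIndex_eq ((blockShift mu ℓ c).2.trans_eq hN.symm) h1 (by rwa [Nat.sub_add_cancel hc]),
    Nat.sub_add_cancel hc]

theorem blockShift_injOn : Set.InjOn (blockShift mu ℓ) {c : Fin N | 1 ≤ blockIndex mu ℓ c} := by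
  intro a ha b hb hab
  have hblk : blockIndex mu ℓ a = blockIndex mu ℓ b := by
    rw [← blockIndex_blockShift_add_one hmono hN ha, ← blockIndex_blockShift_add_one hmono hN hb,
      hab]
  ext
  rw [← blockShift_add hN ha, ← blockShift_add hN hb, hab, hblk]

end Blocks

section DualPartition

variable {mu : ℕ → ℕ} {ℓ : ℕ} (hmono : Antitone mu)
include hmono

theorem dualPart_sub (j k : ℕ) : dualPart mu ℓ j - k = #{i ∈ Ico k ℓ | j < mu i} := by
  have hrange : {i ∈ range ℓ | j + 1 ≤ mu i} = range (dualPart mu ℓ j) :=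
    eq_range_card_of_isLowerSet fun a b hba ha => by
      simp only [coe_filter, mem_range, Set.mem_ofPred_eq] at ha ⊢
      exact ⟨hba.trans_lt ha.1, ha.2.trans (hmono hba)⟩
  rw [← Nat.card_Ico]
  congr 1
  ext i
  have hi := Finset.ext_iff.1 hrange i
  simp only [mem_filter, mem_Ico, mem_range] at hi ⊢
  omega

theorem sum_dualPart_sub {N : ℕ} (hN : blockBoundary mu ℓ = N) (k : ℕ) :
    ∑ j ∈ range N, (dualPart mu ℓ j - k) = N - blockBoundary mu k := by
  have hmu : ∀ i < ℓ, mu i ≤ N := fun i hi =>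
    hN ▸ single_le_sum (fun _ _ => Nat.zero_le _) (mem_range.2 hi)
  calc ∑ j ∈ range N, (dualPart mu ℓ j - k)
      = ∑ i ∈ Ico k ℓ, #{j ∈ range N | j < mu i} := by
        simp only [dualPart_sub hmono]
        exact sum_card_bipartiteAbove_eq_sum_card_bipartiteBelow _
    _ = ∑ i ∈ Ico k ℓ, mu i := by
        refine sum_congr rfl fun i hi => ?_
        have hi' := hmu i (mem_Ico.1 hi).2
        have : {j ∈ range N | j < mu i} = range (mu i) := by
          ext j
          simp only [mem_filter, mem_range]
          omega
        rw [this, card_range]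
    _ = N - blockBoundary mu k := by
        rcases le_total k ℓ with hk | hk
        · rw [← hN, blockBoundary, blockBoundary, ← sum_range_add_sum_Ico _ hk]
          omega
        · rw [Ico_eq_empty_of_le hk, sum_empty, ← hN]
          exact (Nat.sub_eq_zero_of_le (blockBoundary_mono hk)).symm

end DualPartition

section Nilradical

variable {n : ℕ} {mu : ℕ → ℕ} {x : Matrix (Fin (n + 1)) (Fin (n + 1)) ℂ}

theorem pow_apply_eq_zero_of_mem_blockNilrad (hx : x ∈ blockNilrad n mu) (k i : ℕ)
    (r c : Fin (n + 1)) (hr : blockBoundary mu i ≤ r) (hc : c < blockBoundary mu (i + k)) :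
    (x ^ k) r c = 0 := by
  induction k generalizing c with
  | zero => exact Matrix.one_apply_ne fun h => (h ▸ hr).not_gt hc
  | succ k ih =>
    rw [pow_succ, Matrix.mul_apply]
    refine sum_eq_zero fun m _ => ?_
    by_cases hm : (m : ℕ) < blockBoundary mu (i + k)
    · rw [ih m hm, zero_mul]
    · rw [hx m c (i + k) (not_lt.1 hm) hc, mul_zero]

theorem rank_pow_le_of_mem_blockNilrad (hx : x ∈ blockNilrad n mu) (k : ℕ) :
    (x ^ k).rank ≤ #{c : Fin (n + 1) | blockBoundary mu k ≤ c} :=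
  Matrix.rank_le_card_of_apply_eq_zero _ _ fun r c hc =>
    pow_apply_eq_zero_of_mem_blockNilrad hx k 0 r c (Nat.zero_le _) (by simpa using hc)

end Nilradical

noncomputable def blockShiftMatrix (n ℓ : ℕ) (mu : ℕ → ℕ) :
    Matrix (Fin (n + 1)) (Fin (n + 1)) ℂ :=
  Matrix.of fun r c => if 1 ≤ blockIndex mu ℓ c ∧ r = blockShift mu ℓ c then 1 else 0

section ShiftMatrix

variable {n ℓ : ℕ} {mu : ℕ → ℕ} (hmono : Antitone mu) (hN : blockBoundary mu ℓ = n + 1)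
include hmono hN

theorem blockShiftMatrix_mem_blockNilrad : blockShiftMatrix n ℓ mu ∈ blockNilrad n mu := by
  intro r c i hr hc
  simp only [blockShiftMatrix, Matrix.of_apply, ite_eq_right_iff, one_ne_zero, imp_false,
    not_and]
  rintro hb rfl
  have hi : i < blockIndex mu ℓ c := lt_of_not_ge fun h =>
    (hr.trans_lt (blockShift_mem_Ico hmono hN hb).2).not_ge (blockBoundary_mono h)
  exact ((le_blockIndex_iff (c.2.trans_eq hN.symm)).1 hi).not_gt hc

theorem rank_pow_blockShiftMatrix (k : ℕ) :
    (blockShiftMatrix n ℓ mu ^ k).rank = #{c : Fin (n + 1) | blockBoundary mu k ≤ c} := by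
  refine le_antisymm
    (rank_pow_le_of_mem_blockNilrad (blockShiftMatrix_mem_blockNilrad hmono hN) k) ?_
  have hcard : #{c : Fin (n + 1) | blockBoundary mu k ≤ c} =
      #{c : Fin (n + 1) | k ≤ blockIndex mu ℓ c} := by
    congr 1
    ext c
    simp [le_blockIndex_iff (c.2.trans_eq hN.symm)]
  rw [hcard]
  refine Matrix.card_le_rank_pow_of_iterate (d := fun c : Fin (n + 1) => blockIndex mu ℓ c)
    (fun c hc => ?_) (fun c hc => blockIndex_blockShift_add_one hmono hN hc)
    (blockShift_injOn hmono hN) k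
  ext r
  simp [blockShiftMatrix, Pi.single_apply, hc]

end ShiftMatrix

theorem generic_jordan_type_of_parabolic_nilradical_general (n ℓ : ℕ) (mu : ℕ → ℕ)
    (hmono : ∀ i j : ℕ, i ≤ j → mu j ≤ mu i)
    (hsum : ∑ i ∈ Finset.range ℓ, mu i = n + 1) :
    (∀ x ∈ blockNilrad n mu, ∀ k : ℕ,
        (x ^ k).rank ≤ ∑ j ∈ Finset.range (n + 1), (dualPart mu ℓ j - k)) ∧
    (∃ x ∈ blockNilrad n mu, ∀ k : ℕ,
        (x ^ k).rank = ∑ j ∈ Finset.range (n + 1), (dualPart mu ℓ j - k)) := by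
  have hanti : Antitone mu := fun i j => hmono i j
  have hcount (k : ℕ) : ∑ j ∈ range (n + 1), (dualPart mu ℓ j - k) =
      #{c : Fin (n + 1) | blockBoundary mu k ≤ c} := by
    rw [sum_dualPart_sub hanti hsum, Fin.card_filter_le_val]
  refine ⟨fun x hx k => ?_, blockShiftMatrix n ℓ mu,
    blockShiftMatrix_mem_blockNilrad hanti hsum, fun k => ?_⟩
  · rw [hcount]
    exact rank_pow_le_of_mem_blockNilrad hx k
  · rw [hcount]
    exact rank_pow_blockShiftMatrix hanti hsum k

/-- Let `P` be the standard parabolic of `GL_{n+1}` with block sizes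
`μ_1 ≥ μ_2 ≥ ⋯ ≥ μ_ℓ` (a partition of `n+1`).  Then the generic Jordan type of a
matrix in the nilradical `n_P` is the dual partition `μ*`: every `x ∈ n_P` satisfies
`rank (x^k) ≤ Σ_j max(μ*_j - k, 0)` for all `k`, and some `x ∈ n_P` attains these
ranks — i.e. `μ*` is the dominance-maximal Jordan type on `n_P`, so the nilpotent
orbit associated to `n_P` is `O_{μ*}`. -/
theorem generic_jordan_type_of_parabolic_nilradical (n ℓ : ℕ) (mu : ℕ → ℕ)
    (hpos : ∀ i < ℓ, 0 < mu i) (hzero : ∀ i, ℓ ≤ i → mu i = 0)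
    (hmono : ∀ i j : ℕ, i ≤ j → mu j ≤ mu i)
    (hsum : ∑ i ∈ Finset.range ℓ, mu i = n + 1) :
    (∀ x ∈ blockNilrad n mu, ∀ k : ℕ,
        (x ^ k).rank ≤ ∑ j ∈ Finset.range (n + 1), (dualPart mu ℓ j - k)) ∧
    (∃ x ∈ blockNilrad n mu, ∀ k : ℕ,
        (x ^ k).rank = ∑ j ∈ Finset.range (n + 1), (dualPart mu ℓ j - k)) :=
  generic_jordan_type_of_parabolic_nilradical_general n ℓ mu hmono hsum
end

section
/- The dimension of the nilpotent conjugacy class in gl_{n+1}(ℂ) with Jordan type λ equals (n+1)² − Σ_i (λ*_i)², where λ* is the dual partition. -/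
open Polynomial Module

namespace Finset

variable {ι : Type*}

theorem sum_min_succ_eq_sum_min_add_card (s : Finset ι) (e : ι → ℕ) (k : ℕ) :
    ∑ i ∈ s, min (k + 1) (e i) = ∑ i ∈ s, min k (e i) + #{i ∈ s | k < e i} := by
  rw [card_filter, ← sum_add_distrib]
  exact sum_congr rfl fun i _ => by split_ifs <;> omega

theorem sum_tsub_eq_sum_tsub_succ_add_card (s : Finset ι) (e : ι → ℕ) (k : ℕ) :
    ∑ i ∈ s, (e i - k) = ∑ i ∈ s, (e i - (k + 1)) + #{i ∈ s | k < e i} := by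
  rw [card_filter, ← sum_add_distrib]
  exact sum_congr rfl fun i _ => by split_ifs <;> omega

theorem sum_sum_min_eq_sum_card_sq [Fintype ι] (e : ι → ℕ) {N : ℕ} (he : ∀ i, e i ≤ N) :
    ∑ i, ∑ j, min (e i) (e j) = ∑ k ∈ range N, #{i | k < e i} ^ 2 := by
  have hmin (i j : ι) : min (e i) (e j) =
      ∑ k ∈ range N, (if k < e i then 1 else 0) * (if k < e j then 1 else 0) := by
    simp_rw [ite_zero_mul_ite_zero, mul_one, sum_boole]
    rw [← card_range (min (e i) (e j))]
    congr 1
    ext k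
    simp only [mem_filter, mem_range, lt_min_iff]
    have := he i
    omega
  simp_rw [hmin]
  rw [sum_congr rfl fun i _ => sum_comm, sum_comm]
  simp_rw [← sum_mul_sum, sum_boole, Nat.cast_id, sq]

end Finset

namespace LinearMap

variable {R : Type*} (S : Type*) [Semiring R] [Semiring S] {ι M : Type*} {φ : ι → Type*}
  [AddCommMonoid M] [Module R M] [∀ i, AddCommMonoid (φ i)] [∀ i, Module R (φ i)]
  [∀ i, Module S (φ i)] [∀ i, SMulCommClass R S (φ i)]

def lpi : ((i : ι) → M →ₗ[R] φ i) ≃ₗ[S] (M →ₗ[R] (i : ι) → φ i) where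
  toFun := pi
  invFun f i := proj i ∘ₗ f
  map_add' _ _ := rfl
  map_smul' _ _ := rfl
  left_inv _ := rfl
  right_inv _ := rfl

end LinearMap

namespace Submodule

variable (R : Type*) [CommRing R] (M : Type*) [AddCommGroup M] [Module R M]

def linearMapQuotSpanSingletonEquivTorsionBy (r : R) :
    (R ⧸ R ∙ r →ₗ[R] M) ≃ₗ[R] torsionBy R M r where
  toFun φ := ⟨φ (Quotient.mk 1), by
    rw [mem_torsionBy_iff, ← map_smul, ← Quotient.mk_smul, smul_eq_mul, mul_one,
      (Quotient.mk_eq_zero _).mpr (mem_span_singleton_self r), map_zero]⟩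
  map_add' _ _ := rfl
  map_smul' _ _ := rfl
  invFun m := liftQSpanSingleton r (LinearMap.toSpanSingleton R M m) m.2
  left_inv φ := linearMap_qext _ (LinearMap.ext_ring (one_smul R _))
  right_inv m := Subtype.ext (one_smul R (m : M))

end Submodule

theorem Polynomial.X_pow_dvd_X_pow_mul_iff {R : Type*} [CommRing R] [IsDomain R] {b k : ℕ}
    {q : R[X]} : X ^ b ∣ X ^ k * q ↔ X ^ (b - k) ∣ q := by
  rcases le_total k b with h | h
  · rw [← Nat.add_sub_cancel' h, pow_add, mul_dvd_mul_iff_left (pow_ne_zero _ X_ne_zero),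
      Nat.add_sub_cancel_left]
  · simp only [Nat.sub_eq_zero_of_le h, pow_zero, one_dvd, iff_true]
    exact (pow_dvd_pow X h).mul_right q

section

variable {K S M N : Type*} [Field K] [CommRing S] [Algebra K S]
  [AddCommGroup M] [Module S M] [Module K M] [IsScalarTower K S M]
  [AddCommGroup N] [Module S N] [Module K N] [IsScalarTower K S N]

instance [Module.Finite K M] [Module.Finite K N] : Module.Finite K (M →ₗ[S] N) :=
  .of_injective (LinearMap.restrictScalarsₗ K S M N K) (LinearMap.restrictScalars_injective K)

instance : Module.Free K (M →ₗ[S] N) := .of_divisionRing K _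

end

abbrev JordanBlock (K : Type*) [Field K] (a : ℕ) := K[X] ⧸ K[X] ∙ (X : K[X]) ^ a

namespace JordanBlock

variable {K : Type*} [Field K]

instance (a : ℕ) : Module.Finite K (JordanBlock K a) :=
  (AdjoinRoot.powerBasis (pow_ne_zero a (X_ne_zero (R := K)))).finite

theorem finrank_eq (a : ℕ) : finrank K (JordanBlock K a) = a := by
  rw [finrank_quotient_span_eq_natDegree, natDegree_X_pow]

theorem mk_eq_zero_iff {a : ℕ} {q : K[X]} :
    (Submodule.Quotient.mk q : JordanBlock K a) = 0 ↔ X ^ a ∣ q := by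
  rw [Submodule.Quotient.mk_eq_zero, Submodule.mem_span_singleton, dvd_iff_exists_eq_mul_left]
  simp [eq_comm]

theorem finrank_torsionBy_X_pow (k b : ℕ) :
    finrank K (Submodule.torsionBy K[X] (JordanBlock K b) (X ^ k)) = min k b := by
  -- multiplication by `X ^ (b - k)` maps `K[X]` onto the `X ^ k`-torsion, with kernel
  -- `(X ^ min k b)`
  set φ := LinearMap.toSpanSingleton K[X] (JordanBlock K b) (Submodule.Quotient.mk (X ^ (b - k)))
  have hker : LinearMap.ker φ = K[X] ∙ (X : K[X]) ^ min k b := by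
    ext p
    rw [LinearMap.mem_ker, LinearMap.toSpanSingleton_apply, ← Submodule.Quotient.mk_smul,
      smul_eq_mul, mul_comm, mk_eq_zero_iff, X_pow_dvd_X_pow_mul_iff,
      Submodule.mem_span_singleton, dvd_iff_exists_eq_mul_left, tsub_tsub_eq_min]
    simp [eq_comm, min_comm]
  have hrange : LinearMap.range φ = Submodule.torsionBy K[X] (JordanBlock K b) (X ^ k) := by
    have mk_mem_torsionBy {q : K[X]} : (Submodule.Quotient.mk q : JordanBlock K b) ∈
        Submodule.torsionBy K[X] (JordanBlock K b) (X ^ k) ↔ X ^ (b - k) ∣ q := by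
      rw [Submodule.mem_torsionBy_iff, ← Submodule.Quotient.mk_smul, smul_eq_mul, mk_eq_zero_iff,
        X_pow_dvd_X_pow_mul_iff]
    refine le_antisymm ?_ fun y hy => ?_
    · rw [LinearMap.range_toSpanSingleton, Submodule.span_singleton_le_iff_mem, mk_mem_torsionBy]
    · induction y using Submodule.Quotient.induction_on with | _ q => ?_
      obtain ⟨p, rfl⟩ := mk_mem_torsionBy.mp hy
      exact ⟨p, by rw [LinearMap.toSpanSingleton_apply, ← Submodule.Quotient.mk_smul,
        smul_eq_mul, mul_comm]⟩
  rw [← hrange, ← (φ.quotKerEquivRange.restrictScalars K).finrank_eq, hker, finrank_eq]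

theorem exists_linearEquiv_pi (M : Type*) [AddCommGroup M] [Module K[X] M]
    [Module.Finite K[X] M] (hM : ∀ v : M, ∃ m : ℕ, (X : K[X]) ^ m • v = 0) :
    ∃ (d : ℕ) (e : Fin d → ℕ),
      Nonempty (M ≃ₗ[K[X]] (i : Fin d) → JordanBlock K (e i)) := by
  classical
  obtain ⟨d, e, ⟨f⟩⟩ := Module.torsion_by_prime_power_decomposition irreducible_X
    ((Submodule.isTorsion'_powers_iff X).mpr hM)
  exact ⟨d, e, ⟨f.trans (DirectSum.linearEquivFunOnFintype K[X] (Fin d) _)⟩⟩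

variable (M : Type*) [AddCommGroup M] [Module K[X] M] [Module K M] [IsScalarTower K K[X] M]

theorem finrank_linearMap_eq_finrank_torsionBy (a : ℕ) :
    finrank K (JordanBlock K a →ₗ[K[X]] M) = finrank K (Submodule.torsionBy K[X] M (X ^ a)) :=
  ((Submodule.linearMapQuotSpanSingletonEquivTorsionBy K[X] M _).restrictScalars K).finrank_eq

variable {ι : Type*} [Fintype ι]

theorem finrank_linearMap_pi (a : ℕ) (e : ι → ℕ) :
    finrank K (JordanBlock K a →ₗ[K[X]] (i : ι) → JordanBlock K (e i)) =
      ∑ i, min a (e i) := by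
  rw [← (LinearMap.lpi K).finrank_eq, finrank_pi_fintype]
  simp only [finrank_linearMap_eq_finrank_torsionBy, finrank_torsionBy_X_pow]

theorem finrank_linearMap_pi_pi (e : ι → ℕ) :
    finrank K (((i : ι) → JordanBlock K (e i)) →ₗ[K[X]] (i : ι) → JordanBlock K (e i)) =
      ∑ i, ∑ j, min (e i) (e j) := by
  classical
  rw [← (LinearMap.lsum K[X] (fun i => JordanBlock K (e i)) K
    (M := (i : ι) → JordanBlock K (e i))).finrank_eq, finrank_pi_fintype]
  simp only [finrank_linearMap_pi]

end JordanBlock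

section

open Finset

variable {K : Type*} [Field K] (M : Type*) [AddCommGroup M] [Module K[X] M] [Module K M]
  [IsScalarTower K K[X] M] [Module.Finite K M]

theorem finrank_linearMap_self_eq_sum_sq (hM : ∀ v : M, ∃ m : ℕ, (X : K[X]) ^ m • v = 0) :
    finrank K (M →ₗ[K[X]] M) = ∑ k ∈ range (finrank K M),
      (finrank K (Submodule.torsionBy K[X] M (X ^ (k + 1))) -
        finrank K (Submodule.torsionBy K[X] M (X ^ k))) ^ 2 := by
  have : Module.Finite K[X] M := .of_restrictScalars_finite K K[X] M
  obtain ⟨d, e, ⟨G⟩⟩ := JordanBlock.exists_linearEquiv_pi M hM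
  have hdim : finrank K M = ∑ i, e i := by
    rw [(G.restrictScalars K).finrank_eq, finrank_pi_fintype]
    simp only [JordanBlock.finrank_eq]
  have htorsion (k : ℕ) :
      finrank K (Submodule.torsionBy K[X] M (X ^ k)) = ∑ i, min k (e i) := by
    rw [← JordanBlock.finrank_linearMap_eq_finrank_torsionBy,
      ((LinearEquiv.refl K[X] _).arrowCongr G |>.restrictScalars K).finrank_eq,
      JordanBlock.finrank_linearMap_pi]
  rw [(G.arrowCongr G |>.restrictScalars K).finrank_eq, JordanBlock.finrank_linearMap_pi_pi,
    sum_sum_min_eq_sum_card_sq e (N := finrank K M) fun i =>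
      hdim ▸ single_le_sum (by simp) (mem_univ i)]
  refine sum_congr rfl fun k _ => ?_
  rw [htorsion, htorsion, sum_min_succ_eq_sum_min_add_card, Nat.add_sub_cancel_left]

end

namespace Module.End

open Finset

variable {K V : Type*} [Field K] [AddCommGroup V] [Module K V] (f : Module.End K V)

noncomputable def kerMulLeftSubMulRightEquiv :
    LinearMap.ker (LinearMap.mulLeft K f - LinearMap.mulRight K f) ≃ₗ[K]
      (AEval' f →ₗ[K[X]] AEval' f) where
  toFun g := LinearMap.ofAEval f ((AEval'.of f).toLinearMap ∘ₗ g.1) fun v => by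
    have hg : f * g.1 = g.1 * f := sub_eq_zero.mp (LinearMap.mem_ker.mp g.2)
    simp [AEval'.X_smul_of, ← Module.End.mul_apply, hg]
  invFun φ := ⟨(AEval'.of f).symm.toLinearMap ∘ₗ φ.restrictScalars K ∘ₗ
      (AEval'.of f).toLinearMap, by
    rw [LinearMap.mem_ker, LinearMap.sub_apply, LinearMap.mulLeft_apply, LinearMap.mulRight_apply,
      sub_eq_zero]
    ext v
    simp only [Module.End.mul_apply, LinearMap.coe_comp, Function.comp_apply, LinearEquiv.coe_coe,
      LinearMap.coe_restrictScalars]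
    rw [← AEval'.X_smul_of, φ.map_smul, AEval'.of_symm_X_smul]⟩
  map_add' _ _ := rfl
  map_smul' _ _ := rfl
  left_inv _ := rfl
  right_inv _ := rfl

theorem finrank_torsionBy_X_pow_eq_finrank_ker_pow (k : ℕ) :
    finrank K (Submodule.torsionBy K[X] (AEval' f) (X ^ k)) =
      finrank K (LinearMap.ker (f ^ k)) := by
  have : (LinearMap.ker (f ^ k)).map (AEval'.of f).toLinearMap =
      (Submodule.torsionBy K[X] (AEval' f) (X ^ k)).restrictScalars K := by
    ext v
    obtain ⟨w, rfl⟩ := (AEval'.of f).surjective v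
    simp [AEval'.X_pow_smul_of]
  exact (LinearEquiv.ofSubmodules _ _ _ this).finrank_eq.symm

variable [FiniteDimensional K V]

theorem finrank_ker_mulLeft_sub_mulRight_eq_sum_sq (hf : IsNilpotent f) :
    finrank K (LinearMap.ker (LinearMap.mulLeft K f - LinearMap.mulRight K f)) =
      ∑ k ∈ range (finrank K V),
        (finrank K (LinearMap.range (f ^ k)) - finrank K (LinearMap.range (f ^ (k + 1)))) ^ 2 := by
  obtain ⟨m, hm⟩ := hf
  have hX (v : AEval' f) : (X : K[X]) ^ m • v = 0 := by
    obtain ⟨w, rfl⟩ := (AEval'.of f).surjective v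
    simp [AEval'.X_pow_smul_of, hm]
  rw [(kerMulLeftSubMulRightEquiv f).finrank_eq,
    finrank_linearMap_self_eq_sum_sq _ fun v => ⟨m, hX v⟩, (AEval'.of f).finrank_eq]
  refine sum_congr rfl fun k _ => ?_
  have := (f ^ k).finrank_range_add_finrank_ker
  have := (f ^ (k + 1)).finrank_range_add_finrank_ker
  rw [finrank_torsionBy_X_pow_eq_finrank_ker_pow, finrank_torsionBy_X_pow_eq_finrank_ker_pow]
  congr 1
  omega

end Module.End

theorem AlgEquiv.finrank_ker_mulLeft_sub_mulRight {R A B : Type*} [CommSemiring R] [Ring A]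
    [Ring B] [Algebra R A] [Algebra R B] (e : A ≃ₐ[R] B) (a : A) :
    finrank R (LinearMap.ker (LinearMap.mulLeft R (e a) - LinearMap.mulRight R (e a))) =
      finrank R (LinearMap.ker (LinearMap.mulLeft R a - LinearMap.mulRight R a)) := by
  have : (LinearMap.ker (LinearMap.mulLeft R a - LinearMap.mulRight R a)).map
      e.toLinearEquiv.toLinearMap =
      LinearMap.ker (LinearMap.mulLeft R (e a) - LinearMap.mulRight R (e a)) := by
    rw [Submodule.map_equiv_eq_comap_symm]
    ext b
    simp only [Submodule.mem_comap, LinearMap.mem_ker, LinearMap.sub_apply, LinearMap.mulLeft_apply,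
      LinearMap.mulRight_apply, sub_eq_zero]
    rw [← e.symm.injective.eq_iff, map_mul, map_mul, e.symm_apply_apply]
    rfl
  exact (LinearEquiv.ofSubmodules _ _ _ this).finrank_eq.symm

theorem Matrix.finrank_ker_mulLeft_sub_mulRight_eq_sum_sq {K ι : Type*} [Field K] [Fintype ι]
    [DecidableEq ι] (x : Matrix ι ι K) (hx : IsNilpotent x) :
    finrank K (LinearMap.ker (LinearMap.mulLeft K x - LinearMap.mulRight K x)) =
      ∑ k ∈ Finset.range (Fintype.card ι), ((x ^ k).rank - (x ^ (k + 1)).rank) ^ 2 := by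
  rw [← Matrix.toLinAlgEquiv'.finrank_ker_mulLeft_sub_mulRight,
    Module.End.finrank_ker_mulLeft_sub_mulRight_eq_sum_sq _ (hx.map Matrix.toLinAlgEquiv'),
    Module.finrank_fintype_fun_eq_card]
  refine Finset.sum_congr rfl fun k _ => ?_
  rw [← map_pow, ← map_pow]
  rfl

theorem dim_nilpotent_class_general (n ℓ : ℕ) (lam : ℕ → ℕ)
    (x : Matrix (Fin (n + 1)) (Fin (n + 1)) ℂ) (hx : IsNilpotent x)
    (hjordan : ∀ k : ℕ, (x ^ k).rank = ∑ i ∈ Finset.range ℓ, (lam i - k)) :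
    Module.finrank ℂ
        ↥(LinearMap.range
            (LinearMap.mulLeft ℂ x - LinearMap.mulRight ℂ x :
              Matrix (Fin (n + 1)) (Fin (n + 1)) ℂ →ₗ[ℂ]
                Matrix (Fin (n + 1)) (Fin (n + 1)) ℂ)) =
      (n + 1) ^ 2 - ∑ j ∈ Finset.range (n + 1), (dualPart lam ℓ j) ^ 2 := by
  have hdual (k : ℕ) : dualPart lam ℓ k = (x ^ k).rank - (x ^ (k + 1)).rank := by
    rw [hjordan, hjordan, Finset.sum_tsub_eq_sum_tsub_succ_add_card, Nat.add_sub_cancel_left]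
    rfl
  have hker := x.finrank_ker_mulLeft_sub_mulRight_eq_sum_sq hx
  simp only [Fintype.card_fin, ← hdual] at hker
  have hrank := (LinearMap.mulLeft ℂ x - LinearMap.mulRight ℂ x).finrank_range_add_finrank_ker
  rw [hker, Module.finrank_matrix, Module.finrank_self, mul_one, Fintype.card_fin, ← sq] at hrank
  exact Nat.eq_sub_of_add_eq hrank

/-- The dimension of the nilpotent conjugacy class in `gl_{n+1}(ℂ)`
with Jordan type `λ` equals `(n+1)² - Σ_i (λ*_i)²`, where `λ*` is the dual partition.
The dimension of the `GL_{n+1}`-orbit of `x` is the dimension of its tangent space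
at `x`, namely the rank of `ad x : y ↦ x*y - y*x`; equivalently `(n+1)²` minus the
dimension of the centralizer of `x`.  A nilpotent `x` has Jordan type `λ` iff
`rank (x^k) = Σ_i max(λ_i - k, 0)` for every `k`. -/
theorem dim_nilpotent_class (n ℓ : ℕ) (lam : ℕ → ℕ)
    (hpos : ∀ i < ℓ, 0 < lam i) (hzero : ∀ i, ℓ ≤ i → lam i = 0)
    (hmono : ∀ i j : ℕ, i ≤ j → lam j ≤ lam i)
    (hsum : ∑ i ∈ Finset.range ℓ, lam i = n + 1)
    (x : Matrix (Fin (n + 1)) (Fin (n + 1)) ℂ) (hx : IsNilpotent x)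
    (hjordan : ∀ k : ℕ, (x ^ k).rank = ∑ i ∈ Finset.range ℓ, (lam i - k)) :
    Module.finrank ℂ
        ↥(LinearMap.range
            (LinearMap.mulLeft ℂ x - LinearMap.mulRight ℂ x :
              Matrix (Fin (n + 1)) (Fin (n + 1)) ℂ →ₗ[ℂ]
                Matrix (Fin (n + 1)) (Fin (n + 1)) ℂ)) =
      (n + 1) ^ 2 - ∑ j ∈ Finset.range (n + 1), (dualPart lam ℓ j) ^ 2 :=
  dim_nilpotent_class_general n ℓ lam x hx hjordan
end

section
/- Gerstenhaber's algorithm applied to an upper order ideal I of the type A_n root poset produces characteristic sequences S_1, S_2, ... of weakly decreasing lengths, so that λ_I := (|S_1|, |S_2|, ...) is a partition of n+1. -/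
/-- An upper order ideal of matrix positions: `I ⊆ {(i,j) : 1 ≤ i < j ≤ n+1}` with
`(i,j) ∈ I`, `i' ≤ i`, `j ≤ j'`, `i' < j'` implying `(i',j') ∈ I`. -/
def IsMatrixIdeal (n : ℕ) (I : Finset (ℕ × ℕ)) : Prop :=
  (∀ p ∈ I, 1 ≤ p.1 ∧ p.1 < p.2 ∧ p.2 ≤ n + 1) ∧
  (∀ p ∈ I, ∀ q : ℕ × ℕ, 1 ≤ q.1 → q.1 ≤ p.1 → p.2 ≤ q.2 → q.2 ≤ n + 1 → q ∈ I)

/-- `s` is a (greedy) characteristic sequence for the ideal `I` on the set `R` of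
still-available indices: it starts at the smallest element of `R`; each element `i`
is followed by the smallest available `j` with `(i,j) ∈ I`; and it stops when no
such `j` exists. -/
def IsCharSeq (I : Finset (ℕ × ℕ)) (R : Finset ℕ) (s : List ℕ) : Prop :=
  (∃ h : s ≠ [], (s.head h ∈ R ∧ ∀ m ∈ R, s.head h ≤ m) ∧
    ∀ j ∈ R, (s.getLast h, j) ∉ I) ∧
  s.Chain' (fun i j => j ∈ R ∧ (i, j) ∈ I ∧ ∀ j' ∈ R, (i, j') ∈ I → j ≤ j')

/-- `L` is the list of characteristic sequences produced by Gerstenhaber's algorithm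
on the ideal `I`: starting with all of `{1, …, n+1}` available, each sequence is the
greedy characteristic sequence on the remaining indices, which are then removed,
until no index remains. -/
def IsCharSeqList (n : ℕ) (I : Finset (ℕ × ℕ)) (L : List (List ℕ)) : Prop :=
  ∃ R : ℕ → Finset ℕ, R 0 = Finset.Icc 1 (n + 1) ∧ R L.length = ∅ ∧
    ∀ k < L.length, IsCharSeq I (R k) (L.getD k []) ∧
      R (k + 1) = R k \ (L.getD k []).toFinset

/-!
Write `R₀ ⊇ R₁ ⊇ …` for the sets of indices still available. Each characteristic sequence is
strictly increasing inside `Rₖ` and `Rₖ₊₁ = Rₖ \ Sₖ`, so the lengths telescope to `|R₀| = n+1`.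
For monotonicity, compare the greedy runs on `R ⊇ R'`: by induction the `t`-th entry of the run
on `R` is at most that of the run on `R'`, because the ideal is closed under moving the row index
down, so every step available to the run on `R'` is also available to the run on `R`. Hence the
run on `R` cannot stop first.
-/

namespace IsCharSeq

variable {I : Finset (ℕ × ℕ)} {R : Finset ℕ} {s : List ℕ}

lemma getElem_mem (hs : IsCharSeq I R s) (t : ℕ) (ht : t < s.length) : s[t] ∈ R := by
  obtain ⟨⟨hne, ⟨hhead, _⟩, _⟩, hchain⟩ := hs
  cases t with
  | zero => simpa [List.head_eq_getElem hne] using hhead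
  | succ t => exact (List.isChain_iff_getElem.1 hchain t ht).1

lemma toFinset_subset (hs : IsCharSeq I R s) : s.toFinset ⊆ R := by
  intro x hx
  obtain ⟨t, ht, rfl⟩ := List.getElem_of_mem (List.mem_toFinset.1 hx)
  exact hs.getElem_mem t ht

lemma nodup (hlt : ∀ p ∈ I, p.1 < p.2) (hs : IsCharSeq I R s) : s.Nodup :=
  (List.isChain_iff_pairwise.1 (hs.2.imp fun _ _ h => hlt _ h.2.1)).nodup

lemma length_le_card (hlt : ∀ p ∈ I, p.1 < p.2) (hs : IsCharSeq I R s) : s.length ≤ R.card := by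
  rw [← List.toFinset_card_of_nodup (hs.nodup hlt)]
  exact Finset.card_le_card hs.toFinset_subset

lemma getElem_le_of_subset {n : ℕ} (hI : IsMatrixIdeal n I) (hR : ∀ m ∈ R, 1 ≤ m)
    {R' : Finset ℕ} (hsub : R' ⊆ R) {s' : List ℕ} (hs : IsCharSeq I R s)
    (hs' : IsCharSeq I R' s') (t : ℕ) (ht' : t < s'.length) :
    ∃ ht : t < s.length, s[t] ≤ s'[t] := by
  have hmem := hs.getElem_mem
  obtain ⟨⟨hne, ⟨-, hmin⟩, hlast⟩, hchain⟩ := hs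
  obtain ⟨⟨hne', ⟨hhead', -⟩, -⟩, hchain'⟩ := hs'
  induction t with
  | zero =>
    refine ⟨List.length_pos_iff.2 hne, ?_⟩
    simpa [List.head_eq_getElem hne, List.head_eq_getElem hne'] using hmin _ (hsub hhead')
  | succ t ih =>
    obtain ⟨ht, hle⟩ := ih (by omega)
    obtain ⟨hmem', hstep', -⟩ := List.isChain_iff_getElem.1 hchain' t ht'
    have hstep : (s[t], s'[t + 1]) ∈ I :=
      hI.2 _ hstep' _ (hR _ (hmem t ht)) hle le_rfl (hI.1 _ hstep').2.2
    have ht1 : t + 1 < s.length := by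
      by_contra hend
      have hlast_eq : s.getLast hne = s[t] := by
        simp only [List.getLast_eq_getElem]
        congr 1
        omega
      exact hlast _ (hsub hmem') (hlast_eq ▸ hstep)
    exact ⟨ht1, (List.isChain_iff_getElem.1 hchain t ht1).2.2 _ (hsub hmem') hstep⟩

lemma length_le_of_subset {n : ℕ} (hI : IsMatrixIdeal n I) (hR : ∀ m ∈ R, 1 ≤ m)
    {R' : Finset ℕ} (hsub : R' ⊆ R) {s' : List ℕ} (hs : IsCharSeq I R s)
    (hs' : IsCharSeq I R' s') : s'.length ≤ s.length := by
  by_contra! hlt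
  obtain ⟨h, -⟩ := hs.getElem_le_of_subset hI hR hsub hs' s.length hlt
  exact lt_irrefl _ h

end IsCharSeq

section Algorithm

variable {I : Finset (ℕ × ℕ)} {L : List (List ℕ)} {R : ℕ → Finset ℕ}

lemma available_subset_initial
    (hstep : ∀ k < L.length, R (k + 1) = R k \ (L.getD k []).toFinset) :
    ∀ k ≤ L.length, R k ⊆ R 0 := by
  intro k
  induction k with
  | zero => exact fun _ => subset_rfl
  | succ k ih =>
    intro hk
    rw [hstep k hk]
    exact Finset.sdiff_subset.trans (ih (by omega))

lemma sum_take_length_add_card_available (hlt : ∀ p ∈ I, p.1 < p.2)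
    (hstep : ∀ k < L.length, IsCharSeq I (R k) (L.getD k []) ∧
      R (k + 1) = R k \ (L.getD k []).toFinset) :
    ∀ k ≤ L.length, ((L.take k).map List.length).sum + (R k).card = (R 0).card := by
  intro k
  induction k with
  | zero => simp
  | succ k ih =>
    intro hk
    obtain ⟨hs, hR⟩ := hstep k hk
    rw [List.getD_eq_getElem L [] hk] at hs hR
    have hcard : (R (k + 1)).card = (R k).card - L[k].length := by
      rw [hR, Finset.card_sdiff_of_subset hs.toFinset_subset,
        List.toFinset_card_of_nodup (hs.nodup hlt)]
    have hsum : ((L.take (k + 1)).map List.length).sum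
        = ((L.take k).map List.length).sum + L[k].length := by
      rw [List.map_take, List.map_take, List.sum_take_succ _ k (by simpa using hk)]
      simp
    have hlen := hs.length_le_card hlt
    have hprev := ih (by omega)
    omega

end Algorithm

/-- Gerstenhaber's algorithm applied to an upper order ideal `I`
produces characteristic sequences `S_1, S_2, …` of weakly decreasing lengths, so
that `λ_I := (|S_1|, |S_2|, …)` is a partition of `n+1`. -/
theorem charSeq_lengths_form_partition (n : ℕ) (I : Finset (ℕ × ℕ))
    (hI : IsMatrixIdeal n I) (L : List (List ℕ)) (hL : IsCharSeqList n I L) :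
    (L.map List.length).Chain' (fun a b => b ≤ a) ∧
    (L.map List.length).sum = n + 1 := by
  obtain ⟨R, hR0, hRend, hstep⟩ := hL
  have hlt : ∀ p ∈ I, p.1 < p.2 := fun p hp => (hI.1 p hp).2.1
  have hsub0 := available_subset_initial fun k hk => (hstep k hk).2
  constructor
  · rw [List.Chain', List.isChain_map, List.isChain_iff_getElem]
    intro i hi
    have hpos : ∀ m ∈ R i, 1 ≤ m := fun m hm =>
      (Finset.mem_Icc.1 (hR0 ▸ hsub0 i (by omega) hm)).1
    have hle := (hstep i (by omega)).1.length_le_of_subset hI hpos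
      ((hstep i (by omega)).2 ▸ Finset.sdiff_subset) (hstep (i + 1) hi).1
    rwa [List.getD_eq_getElem L [] (i.lt_succ_self.trans hi), List.getD_eq_getElem L [] hi] at hle
  · simpa [hRend, hR0] using sum_take_length_add_card_available hlt hstep L.length le_rfl
end

section
/- The Gerstenhaber partition λ_I is invariant under the basic move: if ideals I and J of the type A_n root poset are related by a basic move, then λ_I = λ_J. -/
/-!
In matrix coordinates the basic move deletes the corner `(a, b + 1)` of `M = toMatrixIdeal I`.
If no characteristic sequence steps from `a` to `b + 1`, the greedy algorithm produces the same
sequences after the deletion. If `I` is `(a - 1)`-stable such a step never happens: every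
predecessor of `a` also reaches `a - 1`, so `a - 1` is used no later than `a`, and its greedy
successor is `b + 1`. If `I` is `(b + 1)`-stable, `M` is invariant under exchanging the indices
`b + 1` and `b + 2`; exchanging them in every sequence turns the run for `M` into the run for `M`
without the corner, and lengths are unchanged.
-/

/-- Upper order ideals in the positive roots of type `A n`
(pairs `[i,j]`, `1 ≤ i ≤ j ≤ n`, with `[i,j] ≼ [i',j']` iff `i' ≤ i ∧ j ≤ j'`). -/
def IsIdealA (n : ℕ) (I : Finset (ℕ × ℕ)) : Prop :=
  (∀ p ∈ I, 1 ≤ p.1 ∧ p.1 ≤ p.2 ∧ p.2 ≤ n) ∧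
  (∀ p ∈ I, ∀ q : ℕ × ℕ, 1 ≤ q.1 → q.1 ≤ p.1 → p.2 ≤ q.2 → q.2 ≤ n → q ∈ I)

/-- Minimal roots of an ideal. -/
def minRootsA (I : Finset (ℕ × ℕ)) : Finset (ℕ × ℕ) :=
  I.filter (fun p => ∀ q ∈ I, p.1 ≤ q.1 → q.2 ≤ p.2 → q = p)

/-- `I` is `k`-stable if `k` is neither a left nor a right endpoint of any minimal
root of `I`. -/
def KStable (I : Finset (ℕ × ℕ)) (k : ℕ) : Prop :=
  ∀ p ∈ minRootsA I, p.1 ≠ k ∧ p.2 ≠ k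

/-- The basic move: remove a minimal root `[a,b]` from the ideal `I` when `I` is
`(a-1)`-stable (with `a ≥ 2`) or `(b+1)`-stable (with `b+1 ≤ n`). -/
def BasicMove (n : ℕ) (I J : Finset (ℕ × ℕ)) : Prop :=
  IsIdealA n I ∧ ∃ p ∈ minRootsA I, J = I.erase p ∧
    ((2 ≤ p.1 ∧ KStable I (p.1 - 1)) ∨ (p.2 + 1 ≤ n ∧ KStable I (p.2 + 1)))

/-- The root ideal `I` of type `A n` (root `[i,j]`) viewed as an ideal of matrix
positions (`[i,j]` corresponds to the entry `(i, j+1)`). -/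
def toMatrixIdeal (I : Finset (ℕ × ℕ)) : Finset (ℕ × ℕ) :=
  I.image (fun p => (p.1, p.2 + 1))

namespace List

variable {α : Type*}

theorem isChain_iff_forall_infix {R : α → α → Prop} {l : List α} :
    l.IsChain R ↔ ∀ ⦃a b : α⦄, [a, b] <:+: l → R a b := by
  rw [isChain_iff_forall_rel_of_append_cons_cons]
  constructor
  · rintro h a b ⟨s, t, rfl⟩
    exact h (l₁ := s) (l₂ := t) (by simp)
  · rintro h a b s t rfl
    exact h ⟨s, t, by simp⟩

theorem getLast_eq_or_exists_infix {l : List α} {x : α} (hx : x ∈ l) :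
    l.getLast (ne_nil_of_mem hx) = x ∨ ∃ y, [x, y] <:+: l := by
  obtain ⟨s, t, rfl⟩ := append_of_mem hx
  rcases t with _ | ⟨y, t⟩
  · simp
  · exact Or.inr ⟨y, s, t, by simp⟩

theorem head_eq_or_exists_infix {l : List α} {x : α} (hx : x ∈ l) :
    l.head (ne_nil_of_mem hx) = x ∨ ∃ w, [w, x] <:+: l := by
  obtain ⟨s, t, rfl⟩ := append_of_mem hx
  rcases eq_nil_or_concat s with rfl | ⟨s, w, rfl⟩
  · simp
  · exact Or.inr ⟨w, s, t, by simp⟩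

theorem Pairwise.not_lt_of_infix [Preorder α] {l : List α} (hl : l.Pairwise (· < ·))
    {x y z : α} (hxy : [x, y] <:+: l) (hz : z ∈ l) (hxz : x < z) : ¬ z < y := by
  obtain ⟨s, t, rfl⟩ := hxy
  simp only [append_assoc, cons_append, nil_append, pairwise_append, pairwise_cons, mem_cons,
    mem_append] at hl hz
  rcases hz with hz | rfl | rfl | hz
  · exact fun _ => lt_asymm hxz (hl.2.2 z hz x (.inl rfl))
  · exact absurd hxz (lt_irrefl _)
  · exact lt_irrefl _
  · exact (lt_asymm (hl.2.1.2.1 z hz) ·)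

end List

def GreedyStep (M : Finset (ℕ × ℕ)) (R : Finset ℕ) (i j : ℕ) : Prop :=
  j ∈ R ∧ (i, j) ∈ M ∧ ∀ j' ∈ R, (i, j') ∈ M → j ≤ j'

namespace GreedyStep

variable {M : Finset (ℕ × ℕ)} {R : Finset ℕ}

theorem right_unique {x y z : ℕ} (hy : GreedyStep M R x y) (hz : GreedyStep M R x z) : y = z :=
  le_antisymm (hy.2.2 z hz.1 hz.2.1) (hz.2.2 y hy.1 hy.2.1)

theorem eq_of_isChain_cons {x : ℕ} :
    ∀ {s t : List ℕ}, (x :: s).IsChain (GreedyStep M R) → (x :: t).IsChain (GreedyStep M R) →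
    (∀ j ∈ R, ((x :: s).getLast (List.cons_ne_nil _ _), j) ∉ M) →
    (∀ j ∈ R, ((x :: t).getLast (List.cons_ne_nil _ _), j) ∉ M) → s = t
  | [], [], _, _, _, _ => rfl
  | [], y :: _, _, ht, hs, _ =>
    have hxy := (List.isChain_cons_cons.1 ht).1
    absurd hxy.2.1 (hs y hxy.1)
  | y :: _, [], hs, _, _, ht =>
    have hxy := (List.isChain_cons_cons.1 hs).1
    absurd hxy.2.1 (ht y hxy.1)
  | y :: s, z :: t, hs, ht, hsl, htl => by
    obtain ⟨hxy, hs⟩ := List.isChain_cons_cons.1 hs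
    obtain ⟨hxz, ht⟩ := List.isChain_cons_cons.1 ht
    obtain rfl := hxy.right_unique hxz
    rw [eq_of_isChain_cons hs ht (by simpa using hsl) (by simpa using htl)]

end GreedyStep

theorem Equiv.swap_succ_le_swap_succ {c u v : ℕ} (huv : u ≤ v) (h : ¬ (u = c ∧ v = c + 1)) :
    Equiv.swap c (c + 1) u ≤ Equiv.swap c (c + 1) v := by
  simp only [Equiv.swap_apply_def]
  split_ifs <;> omega

theorem mem_map_swap_prodCongr {M : Finset (ℕ × ℕ)} {c x y : ℕ} :
    (x, y) ∈ M.map ((Equiv.swap c (c + 1)).prodCongr (Equiv.swap c (c + 1))).toEmbedding ↔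
      (Equiv.swap c (c + 1) x, Equiv.swap c (c + 1) y) ∈ M := by
  simp [Finset.mem_map_equiv, Equiv.symm_swap]

namespace IsCharSeq

variable {M : Finset (ℕ × ℕ)} {R : Finset ℕ} {s : List ℕ}

theorem ne_nil (hs : IsCharSeq M R s) : s ≠ [] := hs.1.1

theorem head_mem (hs : IsCharSeq M R s) : s.head hs.ne_nil ∈ R := hs.1.2.1.1

theorem getLast_mk_notMem (hs : IsCharSeq M R s) {j : ℕ} (hj : j ∈ R) :
    (s.getLast hs.ne_nil, j) ∉ M :=
  hs.1.2.2 j hj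

theorem head_le (hs : IsCharSeq M R s) {m : ℕ} (hm : m ∈ R) : s.head hs.ne_nil ≤ m :=
  hs.1.2.1.2 m hm

theorem greedyStep (hs : IsCharSeq M R s) {x y : ℕ} (hxy : [x, y] <:+: s) :
    GreedyStep M R x y :=
  List.isChain_iff_forall_infix.1 hs.2 hxy

theorem mem (hs : IsCharSeq M R s) {x : ℕ} (hx : x ∈ s) : x ∈ R := by
  rcases List.head_eq_or_exists_infix hx with hhead | ⟨w, hwx⟩
  · exact hhead ▸ hs.head_mem
  · exact (hs.greedyStep hwx).1

theorem pairwise_lt (hs : IsCharSeq M R s) (hM : ∀ p ∈ M, p.1 < p.2) :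
    s.Pairwise (· < ·) :=
  List.isChain_iff_pairwise.1 (hs.2.imp fun _ _ h => hM _ h.2.1)

theorem infix_of_greedyStep (hs : IsCharSeq M R s) {x y : ℕ} (hx : x ∈ s)
    (hxy : GreedyStep M R x y) : [x, y] <:+: s := by
  rcases List.getLast_eq_or_exists_infix hx with hlast | ⟨z, hxz⟩
  · exact absurd hxy.2.1 (hlast ▸ hs.getLast_mk_notMem hxy.1)
  · rwa [hxy.right_unique (hs.greedyStep hxz)]

theorem notMem_of_lt (hs : IsCharSeq M R s) {u v : ℕ} (hvu : v < u)
    (huv : ∀ x, (x, u) ∈ M → (x, v) ∈ M) (hu : u ∈ s) : v ∉ R := by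
  intro hv
  rcases List.head_eq_or_exists_infix hu with hhead | ⟨w, hwu⟩
  · exact absurd (hhead ▸ hs.head_le hv) (not_le.2 hvu)
  · have hw := hs.greedyStep hwu
    exact absurd (hw.2.2 v hv (huv w hw.2.1)) (not_le.2 hvu)

theorem erase (hs : IsCharSeq M R s) {x y : ℕ} (hxy : ¬ [x, y] <:+: s) :
    IsCharSeq (M.erase (x, y)) R s := by
  refine ⟨⟨hs.ne_nil, ⟨hs.head_mem, fun m hm => hs.head_le hm⟩,
    fun j hj hmem => hs.getLast_mk_notMem hj (Finset.mem_of_mem_erase hmem)⟩,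
    List.isChain_iff_forall_infix.2 fun u v huv => ?_⟩
  obtain ⟨hv, huvM, hmin⟩ := hs.greedyStep huv
  refine ⟨hv, Finset.mem_erase.2 ⟨?_, huvM⟩,
    fun j hj hmem => hmin j hj (Finset.mem_of_mem_erase hmem)⟩
  rintro ⟨⟩
  exact hxy huv

theorem unique (hs : IsCharSeq M R s) {t : List ℕ} (ht : IsCharSeq M R t) : s = t := by
  obtain ⟨⟨hs0, ⟨hsR, hsmin⟩, hsl⟩, hsc⟩ := hs
  obtain ⟨⟨ht0, ⟨htR, htmin⟩, htl⟩, htc⟩ := ht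
  rcases s with _ | ⟨x, s⟩
  · exact absurd rfl hs0
  rcases t with _ | ⟨y, t⟩
  · exact absurd rfl ht0
  obtain rfl : x = y := le_antisymm (hsmin y htR) (htmin x hsR)
  rw [GreedyStep.eq_of_isChain_cons hsc htc hsl htl]

theorem map_swap (hs : IsCharSeq M R s) {c : ℕ} (hhead : s.head? ≠ some c)
    (hpred : ∀ x, [x, c] <:+: s → (x, c + 1) ∉ M) :
    IsCharSeq (M.map ((Equiv.swap c (c + 1)).prodCongr (Equiv.swap c (c + 1))).toEmbedding)
      (R.map (Equiv.swap c (c + 1)).toEmbedding) (s.map (Equiv.swap c (c + 1))) := by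
  have hmemR : ∀ {j}, j ∈ R.map (Equiv.swap c (c + 1)).toEmbedding ↔
      Equiv.swap c (c + 1) j ∈ R := by
    simp [Finset.mem_map_equiv, Equiv.symm_swap]
  refine ⟨⟨by simpa using hs.ne_nil, ⟨?_, fun m hm => ?_⟩, fun j hj hmem => ?_⟩, ?_⟩
  · rw [List.head_map]
    exact Finset.mem_map_of_mem _ hs.head_mem
  · rw [List.head_map, ← Equiv.swap_apply_self c (c + 1) m]
    refine Equiv.swap_succ_le_swap_succ (hs.head_le (hmemR.1 hm)) fun h => hhead ?_
    rw [List.head?_eq_some_head hs.ne_nil, h.1]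
  · rw [List.getLast_map, mem_map_swap_prodCongr, Equiv.swap_apply_self] at hmem
    exact hs.getLast_mk_notMem (hmemR.1 hj) hmem
  · refine (List.isChain_map _).2 (List.isChain_iff_forall_infix.2 fun x y hxy => ?_)
    obtain ⟨hy, hxyM, hmin⟩ := hs.greedyStep hxy
    refine ⟨Finset.mem_map_of_mem _ hy, by simpa [mem_map_swap_prodCongr] using hxyM,
      fun j hj hmem => ?_⟩
    rw [mem_map_swap_prodCongr, Equiv.swap_apply_self] at hmem
    rw [← Equiv.swap_apply_self c (c + 1) j]
    refine Equiv.swap_succ_le_swap_succ (hmin _ (hmemR.1 hj) hmem) ?_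
    rintro ⟨rfl, hj'⟩
    exact hpred x hxy (hj' ▸ hmem)

end IsCharSeq

/-- `IsCharSeqList` with the set of available indices threaded through the list. -/
def IsCharSeqRun (M : Finset (ℕ × ℕ)) : Finset ℕ → List (List ℕ) → Prop
  | R, [] => R = ∅
  | R, s :: L => IsCharSeq M R s ∧ IsCharSeqRun M (R \ s.toFinset) L

theorem isCharSeqRun_of_forall_getD {M : Finset (ℕ × ℕ)} :
    ∀ {L : List (List ℕ)} {R : ℕ → Finset ℕ}, R L.length = ∅ →
      (∀ k < L.length, IsCharSeq M (R k) (L.getD k []) ∧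
        R (k + 1) = R k \ (L.getD k []).toFinset) →
      IsCharSeqRun M (R 0) L
  | [], _, hlen, _ => hlen
  | s :: L, R, hlen, hstep => by
    obtain ⟨hs, hR⟩ := hstep 0 (by simp)
    refine ⟨by simpa using hs, ?_⟩
    simp only [List.getD_cons_zero] at hR
    rw [← hR]
    exact isCharSeqRun_of_forall_getD (R := fun k => R (k + 1)) hlen
      fun k hk => by simpa using hstep (k + 1) (by simpa using hk)

theorem IsCharSeqList.isCharSeqRun {n : ℕ} {M : Finset (ℕ × ℕ)} {L : List (List ℕ)}
    (h : IsCharSeqList n M L) : IsCharSeqRun M (Finset.Icc 1 (n + 1)) L := by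
  obtain ⟨R, h0, hlen, hstep⟩ := h
  exact h0 ▸ isCharSeqRun_of_forall_getD hlen hstep

namespace IsCharSeqRun

variable {M : Finset (ℕ × ℕ)} {R : Finset ℕ} {L : List (List ℕ)}

theorem exists_isCharSeq (h : IsCharSeqRun M R L) {s : List ℕ} (hs : s ∈ L) :
    ∃ R' ⊆ R, IsCharSeq M R' s := by
  induction L generalizing R with
  | nil => simp at hs
  | cons t L ih =>
    rcases List.mem_cons.1 hs with rfl | hs
    · exact ⟨R, subset_rfl, h.1⟩
    · obtain ⟨R', hR', hR's⟩ := ih h.2 hs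
      exact ⟨R', hR'.trans Finset.sdiff_subset, hR's⟩

theorem mem (h : IsCharSeqRun M R L) {s : List ℕ} (hs : s ∈ L) {x : ℕ} (hx : x ∈ s) : x ∈ R := by
  obtain ⟨R', hR', hR's⟩ := h.exists_isCharSeq hs
  exact hR' (hR's.mem hx)

theorem eq_of_mem_of_mem (h : IsCharSeqRun M R L) {s t : List ℕ} (hs : s ∈ L) (ht : t ∈ L)
    {x : ℕ} (hxs : x ∈ s) (hxt : x ∈ t) : s = t := by
  induction L generalizing R with
  | nil => simp at hs
  | cons u L ih =>
    have hlater : ∀ r ∈ L, x ∈ r → x ∉ u := fun r hr hxr hxu =>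
      (Finset.mem_sdiff.1 (h.2.mem hr hxr)).2 (List.mem_toFinset.2 hxu)
    rcases List.mem_cons.1 hs with hsu | hsL <;> rcases List.mem_cons.1 ht with htu | htL
    · rw [hsu, htu]
    · exact absurd (hsu ▸ hxs) (hlater t htL hxt)
    · exact absurd (htu ▸ hxt) (hlater s hsL hxs)
    · exact ih h.2 hsL htL

theorem unique (h : IsCharSeqRun M R L) {L' : List (List ℕ)} (h' : IsCharSeqRun M R L') :
    L = L' := by
  induction L generalizing R L' with
  | nil =>
    rcases L' with _ | ⟨s', L'⟩
    · rfl
    · have hR : R = ∅ := h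
      have hhead := h'.1.head_mem
      simp [hR] at hhead
  | cons s L ih =>
    rcases L' with _ | ⟨s', L'⟩
    · have hR : R = ∅ := h'
      have hhead := h.1.head_mem
      simp [hR] at hhead
    · obtain rfl := h.1.unique h'.1
      rw [ih h.2 h'.2]

theorem erase (h : IsCharSeqRun M R L) {x y : ℕ} (hxy : ∀ s ∈ L, ¬ [x, y] <:+: s) :
    IsCharSeqRun (M.erase (x, y)) R L := by
  induction L generalizing R with
  | nil => exact h
  | cons s L ih =>
    exact ⟨h.1.erase (hxy s List.mem_cons_self),
      ih h.2 fun t ht => hxy t (List.mem_cons_of_mem _ ht)⟩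

theorem map_swap (h : IsCharSeqRun M R L) {c : ℕ} (hhead : ∀ s ∈ L, s.head? ≠ some c)
    (hpred : ∀ s ∈ L, ∀ x, [x, c] <:+: s → (x, c + 1) ∉ M) :
    IsCharSeqRun (M.map ((Equiv.swap c (c + 1)).prodCongr (Equiv.swap c (c + 1))).toEmbedding)
      (R.map (Equiv.swap c (c + 1)).toEmbedding) (L.map (List.map (Equiv.swap c (c + 1)))) := by
  induction L generalizing R with
  | nil =>
    simp only [IsCharSeqRun, List.map_nil] at h ⊢
    rw [h, Finset.map_empty]
  | cons s L ih =>
    refine ⟨h.1.map_swap (hhead s List.mem_cons_self) (hpred s List.mem_cons_self), ?_⟩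
    have hsdiff :
        R.map (Equiv.swap c (c + 1)).toEmbedding \ (s.map (Equiv.swap c (c + 1))).toFinset =
          (R \ s.toFinset).map (Equiv.swap c (c + 1)).toEmbedding := by
      ext j
      simp [Finset.mem_map_equiv, Equiv.symm_swap, Equiv.swap_apply_eq_iff]
    rw [hsdiff]
    exact ih h.2 (fun t ht => hhead t (List.mem_cons_of_mem _ ht))
      (fun t ht => hpred t (List.mem_cons_of_mem _ ht))

/-- `v` enters a chain no later than `u` does, and it takes `w` along. -/
theorem not_infix_of_lt (h : IsCharSeqRun M R L) {u v w : ℕ} (hvu : v < u)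
    (huv : ∀ x, (x, u) ∈ M → (x, v) ∈ M) (hvw : (v, w) ∈ M) (hw : ∀ j, (v, j) ∈ M → w ≤ j)
    (hv : v ∈ R) (hwR : w ∈ R) : ∀ s ∈ L, ¬ [u, w] <:+: s := by
  induction L generalizing R with
  | nil => simp
  | cons s L ih =>
    intro t ht huw
    rcases List.mem_cons.1 ht with rfl | ht
    · exact h.1.notMem_of_lt hvu huv (huw.subset (by simp)) hv
    · have hws : w ∉ s := fun hws =>
        (Finset.mem_sdiff.1 (h.2.mem ht (huw.subset (by simp)))).2 (List.mem_toFinset.2 hws)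
      have hvs : v ∉ s := fun hvs =>
        hws ((h.1.infix_of_greedyStep hvs ⟨hwR, hvw, fun j _ => hw j⟩).subset (by simp))
      exact ih h.2 (Finset.mem_sdiff.2 ⟨hv, by simpa using hvs⟩)
        (Finset.mem_sdiff.2 ⟨hwR, by simpa using hws⟩) t ht huw

/-- Since `a` steps to `c`, the run for `M` is also the run for `M` without `(a, c + 1)`; the swap
preserves `M` and moves that corner to `(a, c)`. -/
theorem erase_of_swap_invariant (h : IsCharSeqRun M R L) {a c : ℕ} (hM : ∀ p ∈ M, p.1 < p.2)
    (hinv : ∀ x y, (Equiv.swap c (c + 1) x, Equiv.swap c (c + 1) y) ∈ M ↔ (x, y) ∈ M)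
    (hR : R.map (Equiv.swap c (c + 1)).toEmbedding = R)
    (hcorner : ∀ x, (x, c) ∈ M → a ≤ x → x = a) (hac : a < c)
    (hpair : ∃ s ∈ L, [a, c] <:+: s) :
    IsCharSeqRun (M.erase (a, c)) R (L.map (List.map (Equiv.swap c (c + 1)))) := by
  obtain ⟨s₀, hs₀, has₀⟩ := hpair
  obtain ⟨R₀, -, hR₀⟩ := h.exists_isCharSeq hs₀
  have hsorted := hR₀.pairwise_lt hM
  have ha₀ : a ∈ s₀ := has₀.subset (by simp)
  have hc₀ : c ∈ s₀ := has₀.subset (by simp)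
  have hsame : ∀ s ∈ L, ∀ x ∈ s, x ∈ s₀ → s = s₀ := fun s hs x hxs hx₀ =>
    h.eq_of_mem_of_mem hs hs₀ hxs hx₀
  have herase : IsCharSeqRun (M.erase (a, c + 1)) R L := h.erase fun s hs hinf => by
    obtain rfl := hsame s hs a (hinf.subset (by simp)) ha₀
    exact hsorted.not_lt_of_infix hinf hc₀ hac (lt_add_one c)
  have hswap := herase.map_swap (c := c)
    (fun s hs hhead => by
      obtain rfl := hsame s hs c (List.mem_of_mem_head? hhead) hc₀
      have hle := hR₀.head_le (hR₀.mem ha₀)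
      rw [List.head?_eq_some_head hR₀.ne_nil, Option.some_inj] at hhead
      omega)
    (fun s hs x hxc hx => by
      obtain rfl := hsame s hs c (hxc.subset (by simp)) hc₀
      obtain ⟨hxa_ne, -⟩ := Finset.mem_erase.1 hx
      have hxa : x < a := lt_of_not_ge fun hax =>
        hxa_ne (by rw [hcorner x (hR₀.greedyStep hxc).2.1 hax])
      exact hsorted.not_lt_of_infix hxc ha₀ hxa hac)
  have hMinv :
      M.map ((Equiv.swap c (c + 1)).prodCongr (Equiv.swap c (c + 1))).toEmbedding = M := by
    ext ⟨x, y⟩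
    rw [mem_map_swap_prodCongr, hinv]
  rwa [Finset.map_erase, hMinv, hR, Equiv.toEmbedding_apply, Equiv.prodCongr_apply, Prod.map,
    Equiv.swap_apply_of_ne_of_ne hac.ne (by omega), Equiv.swap_apply_right] at hswap

end IsCharSeqRun

theorem swap_mem_iff_of_row_col {M : Finset (ℕ × ℕ)} {k : ℕ} (hM : ∀ p ∈ M, p.1 < p.2)
    (hcol : ∀ x, (x, k + 1) ∈ M ↔ (x, k) ∈ M) (hrow : ∀ y, (k, y) ∈ M ↔ (k + 1, y) ∈ M)
    (x y : ℕ) : (Equiv.swap k (k + 1) x, Equiv.swap k (k + 1) y) ∈ M ↔ (x, y) ∈ M := by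
  have hkk : (k, k + 1) ∉ M := fun h => (hM _ ((hrow _).1 h)).false
  simp only [Equiv.swap_apply_def]
  split_ifs <;> subst_vars
  all_goals first
    | exact Iff.rfl | exact hcol _ | exact (hcol _).symm | exact hrow _ | exact (hrow _).symm
    | constructor <;> intro h <;> first | exact absurd h hkk | exact absurd (hM _ h) (by simp)

theorem mem_toMatrixIdeal_succ {I : Finset (ℕ × ℕ)} {x y : ℕ} :
    (x, y + 1) ∈ toMatrixIdeal I ↔ (x, y) ∈ I := by
  simp [toMatrixIdeal]

theorem notMem_toMatrixIdeal_zero {I : Finset (ℕ × ℕ)} {x : ℕ} : (x, 0) ∉ toMatrixIdeal I := by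
  simp [toMatrixIdeal]

theorem toMatrixIdeal_erase {I : Finset (ℕ × ℕ)} (p : ℕ × ℕ) :
    toMatrixIdeal (I.erase p) = (toMatrixIdeal I).erase (p.1, p.2 + 1) :=
  Finset.image_erase (fun p q h => by simp_all [Prod.ext_iff]) I p

namespace IsIdealA

variable {n : ℕ} {I : Finset (ℕ × ℕ)}

theorem fst_lt_snd_of_mem_toMatrixIdeal (hI : IsIdealA n I) {p : ℕ × ℕ}
    (hp : p ∈ toMatrixIdeal I) : p.1 < p.2 := by
  obtain ⟨q, hq, rfl⟩ := Finset.mem_image.1 hp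
  have := hI.1 q hq
  simp only
  omega

theorem exists_mem_minRootsA (hI : IsIdealA n I) {p : ℕ × ℕ} (hp : p ∈ I) :
    ∃ q ∈ minRootsA I, p.1 ≤ q.1 ∧ q.2 ≤ p.2 := by
  obtain ⟨q, hq, hmin⟩ := (I.filter fun q => p.1 ≤ q.1 ∧ q.2 ≤ p.2).exists_min_image
    (fun q => q.2 - q.1) ⟨p, Finset.mem_filter.2 ⟨hp, le_rfl, le_rfl⟩⟩
  obtain ⟨hqI, hpq1, hpq2⟩ := Finset.mem_filter.1 hq
  refine ⟨q, Finset.mem_filter.2 ⟨hqI, fun r hr hqr1 hqr2 => ?_⟩, hpq1, hpq2⟩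
  have hle := hmin r (Finset.mem_filter.2 ⟨hr, hpq1.trans hqr1, hqr2.trans hpq2⟩)
  have := hI.1 r hr
  have := hI.1 q hqI
  exact Prod.ext (by omega) (by omega)

end IsIdealA

namespace KStable

variable {n : ℕ} {I : Finset (ℕ × ℕ)}

theorem mk_succ_mem_iff (hI : IsIdealA n I) {m : ℕ} (hk : KStable I (m + 1)) (hm : m + 1 ≤ n)
    {x : ℕ} : (x, m + 1) ∈ I ↔ (x, m) ∈ I := by
  constructor
  · intro hx
    obtain ⟨q, hq, hxq, hqm⟩ := hI.exists_mem_minRootsA hx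
    have hqI := (Finset.mem_filter.1 hq).1
    have hq_ne := (hk q hq).2
    have hx_bounds := hI.1 _ hx
    exact hI.2 q hqI (x, m) (by omega) hxq (by simp only at hqm ⊢; omega) (by omega)
  · intro hx
    exact hI.2 _ hx (x, m + 1) (hI.1 _ hx).1 le_rfl (Nat.le_succ m) hm

theorem mk_mem_iff_succ_mk_mem (hI : IsIdealA n I) {k : ℕ} (hk : KStable I k) (hk1 : 1 ≤ k)
    {y : ℕ} : (k, y) ∈ I ↔ (k + 1, y) ∈ I := by
  constructor
  · intro hy
    obtain ⟨q, hq, hkq, hqy⟩ := hI.exists_mem_minRootsA hy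
    have hqI := (Finset.mem_filter.1 hq).1
    have hq_ne := (hk q hq).1
    exact hI.2 q hqI (k + 1, y) (by simp) (by simp only at hkq ⊢; omega) hqy (hI.1 _ hy).2.2
  · intro hy
    exact hI.2 _ hy (k, y) hk1 (Nat.le_succ k) le_rfl (hI.1 _ hy).2.2

theorem swap_mem_toMatrixIdeal_iff (hI : IsIdealA n I) {k : ℕ} (hk : KStable I k) (hk1 : 1 ≤ k)
    (hkn : k ≤ n) (x y : ℕ) :
    (Equiv.swap k (k + 1) x, Equiv.swap k (k + 1) y) ∈ toMatrixIdeal I ↔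
      (x, y) ∈ toMatrixIdeal I := by
  refine swap_mem_iff_of_row_col (fun p => hI.fst_lt_snd_of_mem_toMatrixIdeal)
    (fun x => ?_) (fun y => ?_) x y
  · obtain ⟨m, rfl⟩ : ∃ m, k = m + 1 := ⟨k - 1, by omega⟩
    rw [mem_toMatrixIdeal_succ, mem_toMatrixIdeal_succ, hk.mk_succ_mem_iff hI hkn]
  · rcases y with _ | y
    · simp only [notMem_toMatrixIdeal_zero]
    · rw [mem_toMatrixIdeal_succ, mem_toMatrixIdeal_succ, hk.mk_mem_iff_succ_mk_mem hI hk1]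

end KStable

namespace IsCharSeqRun

variable {n : ℕ} {I : Finset (ℕ × ℕ)} {L : List (List ℕ)} {a b : ℕ}

theorem not_infix_corner_of_kStable_pred (hI : IsIdealA n I) (hmin : (a, b) ∈ minRootsA I)
    (ha : 2 ≤ a) (hst : KStable I (a - 1))
    (h : IsCharSeqRun (toMatrixIdeal I) (Finset.Icc 1 (n + 1)) L) :
    ∀ s ∈ L, ¬ [a, b + 1] <:+: s := by
  obtain ⟨habI, hminab⟩ := Finset.mem_filter.1 hmin
  have hab := hI.1 _ habI
  obtain ⟨m, rfl⟩ : ∃ m, a = m + 1 + 1 := ⟨a - 2, by omega⟩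
  rw [Nat.add_sub_cancel] at hst
  refine h.not_infix_of_lt (v := m + 1) (lt_add_one _) (fun x hx => ?_) ?_ (fun j hj => ?_)
    (by simp only [Finset.mem_Icc]; omega) (by simp only [Finset.mem_Icc]; omega)
  · rw [mem_toMatrixIdeal_succ] at hx ⊢
    exact (hst.mk_succ_mem_iff hI (by omega)).1 hx
  · exact mem_toMatrixIdeal_succ.2 (hI.2 _ habI (m + 1, b) (by simp) (by simp) le_rfl hab.2.2)
  · rcases j with _ | j
    · exact absurd hj notMem_toMatrixIdeal_zero
    rw [mem_toMatrixIdeal_succ, hst.mk_mem_iff_succ_mk_mem hI (by omega)] at hj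
    by_contra hjb
    have := hminab _ hj le_rfl (by simp only; omega)
    simp only [Prod.mk.injEq] at this
    omega

theorem erase_corner_of_kStable_succ (hI : IsIdealA n I) (hmin : (a, b) ∈ minRootsA I)
    (hb : b + 1 ≤ n) (hst : KStable I (b + 1))
    (h : IsCharSeqRun (toMatrixIdeal I) (Finset.Icc 1 (n + 1)) L)
    (hpair : ∃ s ∈ L, [a, b + 1] <:+: s) :
    IsCharSeqRun ((toMatrixIdeal I).erase (a, b + 1)) (Finset.Icc 1 (n + 1))
      (L.map (List.map (Equiv.swap (b + 1) (b + 1 + 1)))) := by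
  obtain ⟨habI, hminab⟩ := Finset.mem_filter.1 hmin
  have hab := hI.1 _ habI
  have hR : (Finset.Icc 1 (n + 1)).map (Equiv.swap (b + 1) (b + 1 + 1)).toEmbedding =
      Finset.Icc 1 (n + 1) := by
    ext j
    simp only [Finset.mem_map_equiv, Equiv.symm_swap, Finset.mem_Icc, Equiv.swap_apply_def]
    split_ifs <;> omega
  refine h.erase_of_swap_invariant (fun p => hI.fst_lt_snd_of_mem_toMatrixIdeal)
    (hst.swap_mem_toMatrixIdeal_iff hI (by omega) hb) hR (fun x hx hax => ?_) (by omega) hpair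
  rw [mem_toMatrixIdeal_succ] at hx
  exact congrArg Prod.fst (hminab _ hx hax le_rfl)

end IsCharSeqRun

/-- The Gerstenhaber partition `λ_I` is invariant under the basic
move: if ideals `I` and `J` of the type `A n` root poset are related by a basic
move, then `λ_I = λ_J` (the lengths of the characteristic sequences agree). -/
theorem gerstenhaber_partition_invariant_under_basic_move (n : ℕ)
    (I J : Finset (ℕ × ℕ)) (hmove : BasicMove n I J)
    (L L' : List (List ℕ))
    (hL : IsCharSeqList n (toMatrixIdeal I) L)
    (hL' : IsCharSeqList n (toMatrixIdeal J) L') :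
    L.map List.length = L'.map List.length := by
  obtain ⟨hI, ⟨a, b⟩, hmin, rfl, hstable⟩ := hmove
  have hrun := hL.isCharSeqRun
  have hrun' := hL'.isCharSeqRun
  rw [toMatrixIdeal_erase] at hrun'
  dsimp only at hrun' hstable
  by_cases hpair : ∃ s ∈ L, [a, b + 1] <:+: s
  · rcases hstable with ⟨ha, hst⟩ | ⟨hb, hst⟩
    · obtain ⟨s, hs, has⟩ := hpair
      exact absurd has (hrun.not_infix_corner_of_kStable_pred hI hmin ha hst s hs)
    · rw [hrun'.unique (hrun.erase_corner_of_kStable_succ hI hmin hb hst hpair)]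
      simp [Function.comp_def]
  · simp only [not_exists, not_and] at hpair
    rw [hrun'.unique (hrun.erase hpair)]
end

section
/- For an ad-nilpotent ideal I in gl_{n+1} with Gerstenhaber partition λ_I, the first part (λ_I)_1 is the smallest positive integer k such that A^k = 0 for all A ∈ I, and the number of parts of λ_I is the smallest k such that every A ∈ I has rank at most n+1−k. -/
/-- The ad-nilpotent ideal of `gl_{n+1}(ℂ)` spanned by the elementary matrices
`t_{ij}` for `(i,j) ∈ I` (1-indexed positions). -/
noncomputable def idealSubmoduleM (n : ℕ) (I : Finset (ℕ × ℕ)) :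
    Submodule ℂ (Matrix (Fin (n + 1)) (Fin (n + 1)) ℂ) :=
  Submodule.span ℂ
    {m | ∃ p ∈ I, m = Matrix.of (fun a b : Fin (n + 1) =>
      if (a : ℕ) + 1 = p.1 ∧ (b : ℕ) + 1 = p.2 then (1 : ℂ) else 0)}

lemma matrix_eq_zero_of_rank_eq_zero {m : ℕ} (M : Matrix (Fin m) (Fin m) ℂ)
    (h : M.rank = 0) : M = 0 := by
  have hr : LinearMap.range M.mulVecLin = ⊥ := by
    rw [Matrix.rank] at h
    exact Submodule.finrank_eq_zero.mp h
  have h2 : M.mulVecLin = 0 := LinearMap.range_eq_bot.mp hr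
  ext i j
  have h3 := congrFun (congrArg (fun f : (Fin m → ℂ) →ₗ[ℂ] (Fin m → ℂ) =>
    f (Pi.single j 1)) h2) i
  simpa [Matrix.mulVecLin_apply, Matrix.mulVec_single] using h3

/-- Let `λ` (with parts `λ 0 ≥ λ 1 ≥ ⋯`, exactly `ℓ` of them positive,
summing to `n+1`) be the Gerstenhaber partition of the ad-nilpotent ideal `I`, i.e.
the generic Jordan type of `I`: ranks of powers on `I` are bounded by those of a
nilpotent of type `λ`, with the bound attained.  Then the first part `λ 0` is the
least positive `k` with `A^k = 0` for all `A ∈ I`, and the number of parts `ℓ` is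
the optimal `k` such that every `A ∈ I` has rank at most `n+1-k`. -/
theorem index_and_corank_of_ideal (n ℓ : ℕ) (lam : ℕ → ℕ)
    (I : Finset (ℕ × ℕ)) (hI : IsMatrixIdeal n I)
    (hpos : ∀ i < ℓ, 0 < lam i) (hzero : ∀ i, ℓ ≤ i → lam i = 0)
    (hmono : ∀ i j : ℕ, i ≤ j → lam j ≤ lam i)
    (hsum : ∑ i ∈ Finset.range ℓ, lam i = n + 1)
    (hbound : ∀ x ∈ idealSubmoduleM n I, ∀ k : ℕ,
      (x ^ k).rank ≤ ∑ i ∈ Finset.range ℓ, (lam i - k))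
    (hattained : ∃ x ∈ idealSubmoduleM n I, ∀ k : ℕ,
      (x ^ k).rank = ∑ i ∈ Finset.range ℓ, (lam i - k)) :
    IsLeast {k : ℕ | 0 < k ∧ ∀ A ∈ idealSubmoduleM n I, A ^ k = 0} (lam 0) ∧
    IsGreatest {k : ℕ | ∀ A ∈ idealSubmoduleM n I, A.rank + k ≤ n + 1} ℓ := by
  have hl0 : 0 < ℓ := by
    rcases Nat.eq_zero_or_pos ℓ with h | h
    · simp [h] at hsum
    · exact h
  have key : ∑ i ∈ Finset.range ℓ, (lam i - 1) + ℓ = n + 1 := by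
    have h1 : ∑ i ∈ Finset.range ℓ, (lam i - 1 + 1) = n + 1 := by
      rw [← hsum]
      exact Finset.sum_congr rfl fun i hi =>
        Nat.sub_add_cancel (hpos i (Finset.mem_range.mp hi))
    simpa [Finset.sum_add_distrib] using h1
  constructor
  · constructor
    · refine ⟨hpos 0 hl0, fun A hA => ?_⟩
      have h := hbound A hA (lam 0)
      have hz : ∑ i ∈ Finset.range ℓ, (lam i - lam 0) = 0 :=
        Finset.sum_eq_zero fun i _ => Nat.sub_eq_zero_of_le (hmono 0 i (Nat.zero_le i))
      rw [hz, Nat.le_zero] at h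
      exact matrix_eq_zero_of_rank_eq_zero _ h
    · rintro k ⟨hk0, hk⟩
      obtain ⟨x, hx, hxr⟩ := hattained
      have h := hxr k
      rw [hk x hx, Matrix.rank_zero] at h
      have h0 : lam 0 - k = 0 :=
        (Finset.sum_eq_zero_iff.mp h.symm) 0 (Finset.mem_range.mpr hl0)
      omega
  · constructor
    · intro A hA
      have h := hbound A hA 1
      rw [pow_one] at h
      omega
    · intro k hk
      obtain ⟨x, hx, hxr⟩ := hattained
      have h := hxr 1
      rw [pow_one] at h
      have h2 := hk x hx
      omega
end

section
/- Let I be an upper order ideal of the type A_n root poset, viewed as a ballot sequence/Dyck path of length 2(n+1). The number of parts of the Gerstenhaber partition λ_I equals the maximum height of the associated Dyck path. -/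
/-- Number of ones among `b 1, …, b t`. -/
def onesUpTo (b : ℕ → Bool) (t : ℕ) : ℕ :=
  ((Finset.Icc 1 t).filter (fun s => b s = true)).card

/-- Number of zeros among `b 1, …, b t`. -/
def zerosUpTo (b : ℕ → Bool) (t : ℕ) : ℕ :=
  ((Finset.Icc 1 t).filter (fun s => b s = false)).card

/-!
For generic `x` in the ideal, `rank x = ∑ (λᵢ - 1) = (n + 1) - ℓ`, so `ℓ` is `n + 1` minus the
largest rank of an element of the ideal. This largest rank is `n + 1 - M`, where `M` is the
maximal height of the path.

If the path reaches height `M = o - z` after `z` zeros and `o` ones, then every position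
`(i, j)` of `I` has `i ≤ z` or `o < j`: every element of the ideal is supported on `z` rows and
`n + 1 - o` columns, so its rank is at most `n + 1 - M`. Conversely, since the path never
exceeds height `M`, the `i`-th zero comes before the `(i + M)`-th one, i.e. `I` contains the
`M`-th superdiagonal; the `M`-th power of the nilpotent Jordan block lies in the ideal and has
rank `n + 1 - M`.
-/

open Finset Matrix

section PathStatistics

variable (b : ℕ → Bool)

lemma onesUpTo_add_zerosUpTo (t : ℕ) : onesUpTo b t + zerosUpTo b t = t := by
  have h := card_filter_add_card_filter_not (s := Icc 1 t) (fun s => b s = true)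
  simpa [onesUpTo, zerosUpTo] using h

lemma onesUpTo_mono : Monotone (onesUpTo b) := fun _ _ h =>
  card_le_card (filter_subset_filter _ (Icc_subset_Icc le_rfl h))

lemma zerosUpTo_mono : Monotone (zerosUpTo b) := fun _ _ h =>
  card_le_card (filter_subset_filter _ (Icc_subset_Icc le_rfl h))

lemma zerosUpTo_succ (t : ℕ) :
    zerosUpTo b (t + 1) = zerosUpTo b t + if b (t + 1) = false then 1 else 0 := by
  simp only [zerosUpTo, card_filter]
  exact sum_Icc_succ_top (by omega) _

lemma onesUpTo_succ_of_false {t : ℕ} (h : b (t + 1) = false) :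
    onesUpTo b (t + 1) = onesUpTo b t := by
  have hz := zerosUpTo_succ b t
  rw [if_pos h] at hz
  have := onesUpTo_add_zerosUpTo b t
  have := onesUpTo_add_zerosUpTo b (t + 1)
  omega

lemma exists_zerosUpTo_eq_of_lt {i N : ℕ} (h : i < zerosUpTo b N) :
    ∃ s < N, zerosUpTo b s = i ∧ b (s + 1) = false := by
  induction N with
  | zero => simp [zerosUpTo] at h
  | succ N ih =>
    rw [zerosUpTo_succ] at h
    by_cases hi : i < zerosUpTo b N
    · obtain ⟨s, hs, hsi, hb⟩ := ih hi
      exact ⟨s, by omega, hsi, hb⟩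
    · split_ifs at h with hb
      · exact ⟨N, by omega, by omega, hb⟩
      · omega

lemma le_zerosUpTo_or_onesUpTo_lt {i j t : ℕ} (hi : i ≤ zerosUpTo b t)
    (hj : onesUpTo b t < j) (s : ℕ) : i ≤ zerosUpTo b s ∨ onesUpTo b s < j := by
  rcases le_total t s with hts | hst
  · exact .inl (hi.trans (zerosUpTo_mono b hts))
  · exact .inr ((onesUpTo_mono b hst).trans_lt hj)

lemma exists_le_zerosUpTo_onesUpTo_lt {N M i : ℕ}
    (hM : ∀ s < N, onesUpTo b s ≤ zerosUpTo b s + M) (hi : i < zerosUpTo b N) :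
    ∃ t ∈ Icc 1 N, i + 1 ≤ zerosUpTo b t ∧ onesUpTo b t < i + 1 + M := by
  obtain ⟨s, hsN, hsi, hb⟩ := exists_zerosUpTo_eq_of_lt b hi
  refine ⟨s + 1, mem_Icc.2 ⟨by omega, hsN⟩, ?_, ?_⟩
  · simp [zerosUpTo_succ, hb, hsi]
  · rw [onesUpTo_succ_of_false b hb]
    have := hM s hsN
    omega

def maxHeight (N : ℕ) : ℕ :=
  (Icc 1 N).sup fun t => onesUpTo b t - zerosUpTo b t

lemma onesUpTo_le_zerosUpTo_add_maxHeight {s N : ℕ} (hs : s ≤ N) :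
    onesUpTo b s ≤ zerosUpTo b s + maxHeight b N := by
  rcases Nat.eq_zero_or_pos s with rfl | hs0
  · simp [onesUpTo]
  · exact Nat.sub_le_iff_le_add'.1
      (le_sup (f := fun t => onesUpTo b t - zerosUpTo b t) (mem_Icc.2 ⟨hs0, hs⟩))

lemma exists_maxHeight_eq (N : ℕ) : ∃ s ≤ N, maxHeight b N = onesUpTo b s - zerosUpTo b s := by
  rcases Nat.eq_zero_or_pos N with rfl | hN
  · exact ⟨0, le_rfl, by simp [maxHeight, onesUpTo]⟩
  · obtain ⟨s, hs, hsup⟩ := exists_mem_eq_sup (Icc 1 N) ⟨1, mem_Icc.2 ⟨le_rfl, hN⟩⟩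
      fun t => onesUpTo b t - zerosUpTo b t
    exact ⟨s, (mem_Icc.1 hs).2, hsup⟩

lemma one_le_maxHeight {N : ℕ} (hN : 1 ≤ N) (hb : zerosUpTo b 1 ≤ onesUpTo b 1) :
    1 ≤ maxHeight b N := by
  have := onesUpTo_add_zerosUpTo b 1
  have := onesUpTo_le_zerosUpTo_add_maxHeight b hN
  omega

end PathStatistics

namespace Matrix

variable {K m n : Type*} [Field K] [Fintype n]

lemma rank_add_le (A B : Matrix m n K) : (A + B).rank ≤ A.rank + B.rank := by
  rw [rank, rank, rank, mulVecLin_add]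
  refine (Submodule.finrank_mono ?_).trans (Submodule.finrank_add_le_finrank_add_finrank _ _)
  rintro _ ⟨v, rfl⟩
  exact Submodule.mem_sup.2 ⟨_, ⟨v, rfl⟩, _, ⟨v, rfl⟩, rfl⟩

lemma rank_diagonal_ite_mem [DecidableEq n] (S : Finset n) :
    (diagonal fun i => if i ∈ S then (1 : K) else 0).rank = #S := by
  classical
  rw [rank_diagonal]
  simp [Fintype.card_subtype]

lemma rank_le_card_add_card_of_support_subset [Fintype m] [DecidableEq m] [DecidableEq n]
    (A : Matrix m n K) (R : Finset m) (C : Finset n)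
    (h : ∀ i j, A i j ≠ 0 → i ∈ R ∨ j ∈ C) : A.rank ≤ #R + #C := by
  set P : Matrix m m K := diagonal fun i => if i ∈ R then 1 else 0
  set Q : Matrix n n K := diagonal fun j => if j ∈ C then 1 else 0
  have hA : A = P * A + (A - P * A) * Q := by
    ext i j
    by_cases hi : i ∈ R <;> by_cases hj : j ∈ C <;> simp [P, Q, hi, hj]
    by_contra hij
    simpa [hi, hj] using h i j hij
  calc A.rank = (P * A + (A - P * A) * Q).rank := by rw [← hA]
    _ ≤ (P * A).rank + ((A - P * A) * Q).rank := rank_add_le _ _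
    _ ≤ P.rank + Q.rank := add_le_add (rank_mul_le_left _ _) (rank_mul_le_right _ _)
    _ = #R + #C := by rw [rank_diagonal_ite_mem, rank_diagonal_ite_mem]

end Matrix

def shiftMatrix (R : Type*) [Zero R] [One R] (N M : ℕ) : Matrix (Fin N) (Fin N) R :=
  of fun a c => if (c : ℕ) = a + M then 1 else 0

lemma sub_le_rank_shiftMatrix {R : Type*} [CommSemiring R] [StrongRankCondition R] (N M : ℕ) :
    N - M ≤ (shiftMatrix R N M).rank := by
  have hsub : (shiftMatrix R N M).submatrix (Fin.castLE (Nat.sub_le N M))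
      (fun a : Fin (N - M) => (⟨a + M, by omega⟩ : Fin N)) = 1 := by
    ext a c
    simp [shiftMatrix, one_apply, Fin.ext_iff, eq_comm]
  calc N - M = (1 : Matrix (Fin (N - M)) (Fin (N - M)) R).rank := by simp [rank_one]
    _ ≤ (shiftMatrix R N M).rank := hsub ▸ rank_submatrix_le _ _ _

lemma mem_idealSubmoduleM_iff {n : ℕ} {I : Finset (ℕ × ℕ)}
    {x : Matrix (Fin (n + 1)) (Fin (n + 1)) ℂ} :
    x ∈ idealSubmoduleM n I ↔ ∀ a c, x a c ≠ 0 → ((a : ℕ) + 1, (c : ℕ) + 1) ∈ I := by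
  have hgen (a c : Fin (n + 1)) : single a c (1 : ℂ) = of fun a' c' : Fin (n + 1) =>
      if (a' : ℕ) + 1 = a + 1 ∧ (c' : ℕ) + 1 = c + 1 then (1 : ℂ) else 0 := by
    ext a' c'
    simp [single_apply, Fin.ext_iff, eq_comm]
  constructor
  · intro hx
    induction hx using Submodule.span_induction with
    | mem m hm =>
      obtain ⟨p, hp, rfl⟩ := hm
      intro a c hac
      simp only [of_apply, ne_eq, ite_eq_right_iff, not_forall] at hac
      obtain ⟨⟨h1, h2⟩, -⟩ := hac
      rwa [h1, h2]
    | zero => simp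
    | add x y _ _ hx hy =>
      intro a c hac
      by_cases hxac : x a c = 0
      · exact hy a c (by simpa [hxac] using hac)
      · exact hx a c hxac
    | smul r x _ hx =>
      intro a c hac
      exact hx a c (right_ne_zero_of_mul hac)
  · intro hx
    rw [matrix_eq_sum_single x]
    refine Submodule.sum_mem _ fun a _ => Submodule.sum_mem _ fun c _ => ?_
    by_cases hac : x a c = 0
    · simp [hac]
    · rw [← mul_one (x a c), ← smul_eq_mul, ← smul_single, hgen]
      exact Submodule.smul_mem _ _ (Submodule.subset_span ⟨_, hx a c hac, rfl⟩)

lemma rank_le_of_mem_idealSubmoduleM {n z o : ℕ} {I : Finset (ℕ × ℕ)}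
    (hI : ∀ p ∈ I, p.1 ≤ z ∨ o < p.2) {x : Matrix (Fin (n + 1)) (Fin (n + 1)) ℂ}
    (hx : x ∈ idealSubmoduleM n I) : x.rank ≤ z + (n + 1 - o) := by
  have hrows : #{a : Fin (n + 1) | (a : ℕ) < z} ≤ z := by
    rw [Fin.card_filter_val_lt]; exact min_le_right _ _
  have hcols : #{c : Fin (n + 1) | ¬ (c : ℕ) < o} = n + 1 - o := by
    have h := card_filter_add_card_filter_not (s := univ) (fun c : Fin (n + 1) => (c : ℕ) < o)
    rw [Fin.card_filter_val_lt, card_univ, Fintype.card_fin] at h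
    omega
  refine (rank_le_card_add_card_of_support_subset x _ _ fun a c hac => ?_).trans
    (add_le_add hrows hcols.le)
  have := hI _ (mem_idealSubmoduleM_iff.1 hx a c hac)
  simp only [mem_filter, mem_univ, true_and]
  omega

lemma rank_add_maxHeight_le {n N : ℕ} {b : ℕ → Bool} {I : Finset (ℕ × ℕ)}
    (hI : ∀ p ∈ I, ∃ t, p.1 ≤ zerosUpTo b t ∧ onesUpTo b t < p.2) (hN : onesUpTo b N ≤ n + 1)
    {x : Matrix (Fin (n + 1)) (Fin (n + 1)) ℂ} (hx : x ∈ idealSubmoduleM n I) :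
    x.rank + maxHeight b N ≤ n + 1 := by
  obtain ⟨s, hsN, hs⟩ := exists_maxHeight_eq b N
  have hsplit : ∀ p ∈ I, p.1 ≤ zerosUpTo b s ∨ onesUpTo b s < p.2 := fun p hp => by
    obtain ⟨t, hzt, hot⟩ := hI p hp
    exact le_zerosUpTo_or_onesUpTo_lt b hzt hot s
  have := rank_le_of_mem_idealSubmoduleM hsplit hx
  have := rank_le_width x
  have := onesUpTo_mono b hsN
  omega

lemma shiftMatrix_mem_idealSubmoduleM {n M : ℕ} {I : Finset (ℕ × ℕ)}
    (hI : ∀ a, a + M ≤ n → (a + 1, a + 1 + M) ∈ I) :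
    shiftMatrix ℂ (n + 1) M ∈ idealSubmoduleM n I := by
  refine mem_idealSubmoduleM_iff.2 fun a c hac => ?_
  have hc : (c : ℕ) = a + M := by simpa [shiftMatrix] using hac
  rw [hc, add_right_comm]
  exact hI a (by omega)

lemma sum_sub_one_add_card {ι : Type*} (s : Finset ι) (f : ι → ℕ) (hf : ∀ i ∈ s, 0 < f i) :
    ∑ i ∈ s, (f i - 1) + #s = ∑ i ∈ s, f i := by
  rw [card_eq_sum_ones, ← sum_add_distrib]
  exact sum_congr rfl fun i hi => Nat.sub_add_cancel (hf i hi)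

theorem parts_eq_max_height_general (n ℓ : ℕ) (lam : ℕ → ℕ) (b : ℕ → Bool)
    (I : Finset (ℕ × ℕ))
    -- `b` is a ballot sequence of length `2(n+1)`:
    (hzeros : zerosUpTo b (2 * (n + 1)) = n + 1)
    (hballot : ∀ t ≤ 2 * (n + 1), zerosUpTo b t ≤ onesUpTo b t)
    -- `I` is the ideal whose boundary path is given by `b`:
    (hIb : ∀ p : ℕ × ℕ, p ∈ I ↔
      1 ≤ p.1 ∧ p.1 < p.2 ∧ p.2 ≤ n + 1 ∧
      ∃ t ∈ Finset.Icc 1 (2 * (n + 1)), p.1 ≤ zerosUpTo b t ∧ onesUpTo b t < p.2)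
    -- `λ` is the generic Jordan type of `I`, with `ℓ` parts:
    (hpos : ∀ i < ℓ, 0 < lam i)
    (hsum : ∑ i ∈ Finset.range ℓ, lam i = n + 1)
    (hbound : ∀ x ∈ idealSubmoduleM n I, ∀ k : ℕ,
      (x ^ k).rank ≤ ∑ i ∈ Finset.range ℓ, (lam i - k))
    (hattained : ∃ x ∈ idealSubmoduleM n I, ∀ k : ℕ,
      (x ^ k).rank = ∑ i ∈ Finset.range ℓ, (lam i - k)) :
    ℓ = (Finset.Icc 1 (2 * (n + 1))).sup (fun t => onesUpTo b t - zerosUpTo b t) := by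
  change ℓ = maxHeight b (2 * (n + 1))
  set M := maxHeight b (2 * (n + 1))
  have hM : 1 ≤ M := one_le_maxHeight b (by omega) (hballot 1 (by omega))
  have hones : onesUpTo b (2 * (n + 1)) ≤ n + 1 := by
    have := onesUpTo_add_zerosUpTo b (2 * (n + 1))
    omega
  have hshift : shiftMatrix ℂ (n + 1) M ∈ idealSubmoduleM n I :=
    shiftMatrix_mem_idealSubmoduleM fun a ha => (hIb _).2 ⟨by omega, by omega, by omega,
      exists_le_zerosUpTo_onesUpTo_lt b
        (fun s hs => onesUpTo_le_zerosUpTo_add_maxHeight b hs.le) (by omega)⟩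
  have hparts : ∑ i ∈ range ℓ, (lam i - 1) + ℓ = n + 1 := by
    simpa [hsum] using sum_sub_one_add_card (range ℓ) lam fun i hi => hpos i (mem_range.1 hi)
  obtain ⟨x, hx, hxrank⟩ := hattained
  have hupper : x.rank + M ≤ n + 1 := by
    refine rank_add_maxHeight_le (fun p hp => ?_) hones hx
    obtain ⟨-, -, -, t, -, ht⟩ := (hIb p).1 hp
    exact ⟨t, ht⟩
  have hgeneric := hxrank 1
  have hshift_le := hbound _ hshift 1
  rw [pow_one] at hgeneric hshift_le
  have := sub_le_rank_shiftMatrix (R := ℂ) (n + 1) M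
  omega

/-- Let `I` be an upper order ideal, viewed as a ballot sequence/Dyck
path `b_1, …, b_{2(n+1)}` (via the boundary lattice path: `t_{ij} ∈ I` iff the
`i`-th zero of `b` occurs before the `j`-th one of `b`).  Then the number of parts
`ℓ` of the Gerstenhaber partition `λ_I` (the generic Jordan type of `I`) equals the
maximum height `max_t (#ones - #zeros)` of the associated path. -/
theorem parts_eq_max_height (n ℓ : ℕ) (lam : ℕ → ℕ) (b : ℕ → Bool)
    (I : Finset (ℕ × ℕ))
    -- `b` is a ballot sequence of length `2(n+1)`:
    (hones : onesUpTo b (2 * (n + 1)) = n + 1)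
    (hzeros : zerosUpTo b (2 * (n + 1)) = n + 1)
    (hballot : ∀ t ≤ 2 * (n + 1), zerosUpTo b t ≤ onesUpTo b t)
    -- `I` is the ideal whose boundary path is given by `b`:
    (hIb : ∀ p : ℕ × ℕ, p ∈ I ↔
      1 ≤ p.1 ∧ p.1 < p.2 ∧ p.2 ≤ n + 1 ∧
      ∃ t ∈ Finset.Icc 1 (2 * (n + 1)), p.1 ≤ zerosUpTo b t ∧ onesUpTo b t < p.2)
    -- `λ` is the generic Jordan type of `I`, with `ℓ` parts:
    (hpos : ∀ i < ℓ, 0 < lam i) (hzero : ∀ i, ℓ ≤ i → lam i = 0)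
    (hmono : ∀ i j : ℕ, i ≤ j → lam j ≤ lam i)
    (hsum : ∑ i ∈ Finset.range ℓ, lam i = n + 1)
    (hbound : ∀ x ∈ idealSubmoduleM n I, ∀ k : ℕ,
      (x ^ k).rank ≤ ∑ i ∈ Finset.range ℓ, (lam i - k))
    (hattained : ∃ x ∈ idealSubmoduleM n I, ∀ k : ℕ,
      (x ^ k).rank = ∑ i ∈ Finset.range ℓ, (lam i - k)) :
    ℓ = (Finset.Icc 1 (2 * (n + 1))).sup (fun t => onesUpTo b t - zerosUpTo b t) :=
  parts_eq_max_height_general n ℓ lam b I hzeros hballot hIb hpos hsum hbound hattained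
end
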